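/- arXiv:1908.05865 — 9 statements merged into one kernel-verified Lean document; each statement's English description precedes it below -/
import Mathlib

section
/- Let q ≥ 2 and 0 < t < m be integers, let 𝓕 ⊆ {0,...,q-1}^m be a set of row indices, and let (T,b) and (T',b') be two distinct column indices (where T, T' are t-element subsets of {0,...,m-1} and b, b' ∈ {0,...,q-1}^t). Suppose f, f' ∈ 𝓕 are such that the entries of the array of Construction 1 at positions (f,(T,b)) and (f',(T',b')) are both non-star (i.e. d(f|_T, b) = t and d(f'|_{T'}, b') = t) and their induced vectors are equal. Then: (1) T ≠ T' and f ≠ f', i.e. the two entries lie in distinct columns and distinct rows; and (2) the entries at positions (f,(T',b')) and (f',(T,b)) are both stars, i.e. d(f|_{T'}, b') < t and d(f'|_T, b) < t. -/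
/-- The vector induced by a non-star entry of Construction 1: row index `f`,
column index `(T, b)` where `T` is a `t`-element subset of `{0,...,m-1}`
(with `hT : T.card = t`) and `b ∈ {0,...,q-1}^t`.  The induced vector `e`
satisfies `e_{δ_h} = b_h` for the increasing enumeration `δ_0 < ... < δ_{t-1}`
of `T`, and `e_i = f_i` for `i ∉ T`. -/
def inducedVector {m t q : ℕ} (f : Fin m → Fin q) (T : Finset (Fin m))
    (hT : T.card = t) (b : Fin t → Fin q) : Fin m → Fin q :=
  fun i => if hi : i ∈ T then b ((T.orderIsoOfFin hT).symm ⟨i, hi⟩) else f i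

/-- The restriction `f|_T = (f_{δ_0},...,f_{δ_{t-1}})` of `f` to a `t`-element
subset `T = {δ_0 < ... < δ_{t-1}}`. -/
def restrictVector {m t q : ℕ} (f : Fin m → Fin q) (T : Finset (Fin m))
    (hT : T.card = t) : Fin t → Fin q :=
  fun h => f (T.orderIsoOfFin hT h)

lemma aux_all_ne {t q : ℕ} {x y : Fin t → Fin q} (h : hammingDist x y = t) :
    ∀ i, x i ≠ y i := by
  have := Finset.filter_card_eq (p := fun i => x i ≠ y i) (s := Finset.univ)
    (by simpa [hammingDist, Fintype.card_fin] using h)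
  intro i
  exact this i (Finset.mem_univ i)

lemma aux_lt {t q : ℕ} {x y : Fin t → Fin q} (i : Fin t) (h : x i = y i) :
    hammingDist x y < t := by
  have hss : (Finset.univ.filter (fun j => x j ≠ y j)) ⊂ Finset.univ := by
    rw [Finset.ssubset_univ_iff]
    intro hcontra
    have : x i ≠ y i := by
      have := Finset.mem_univ i
      rw [← hcontra, Finset.mem_filter] at this
      exact this.2
    exact this h
  have := Finset.card_lt_card hss
  simpa [hammingDist, Fintype.card_fin] using this

lemma inducedVector_of_mem {m t q : ℕ} (f : Fin m → Fin q) (T : Finset (Fin m))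
    (hT : T.card = t) (b : Fin t → Fin q) {i : Fin m} (hi : i ∈ T) :
    inducedVector f T hT b i = b ((T.orderIsoOfFin hT).symm ⟨i, hi⟩) := dif_pos hi

lemma inducedVector_of_not_mem {m t q : ℕ} (f : Fin m → Fin q) (T : Finset (Fin m))
    (hT : T.card = t) (b : Fin t → Fin q) {i : Fin m} (hi : i ∉ T) :
    inducedVector f T hT b i = f i := dif_neg hi

lemma restrictVector_symm {m t q : ℕ} (f : Fin m → Fin q) (T : Finset (Fin m))
    (hT : T.card = t) {i : Fin m} (hi : i ∈ T) :
    restrictVector f T hT ((T.orderIsoOfFin hT).symm ⟨i, hi⟩) = f i := by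
  unfold restrictVector
  rw [OrderIso.apply_symm_apply]

/-- Proposition 1: if two non-star entries of the array of Construction 1,
in positions `(f, (T,b))` and `(f', (T',b'))` with `(T,b) ≠ (T',b')`, have the
same induced vector, then they lie in distinct columns with `T ≠ T'` and in
distinct rows (`f ≠ f'`), and the two opposite positions `(f, (T',b'))` and
`(f', (T,b))` are both stars. -/
theorem construction1_same_induced_vector
    (q m t : ℕ) (hq : 2 ≤ q) (ht : 0 < t) (htm : t < m)
    (𝓕 : Set (Fin m → Fin q))
    (T T' : Finset (Fin m)) (hT : T.card = t) (hT' : T'.card = t)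
    (b b' : Fin t → Fin q)
    (f f' : Fin m → Fin q) (hf𝓕 : f ∈ 𝓕) (hf'𝓕 : f' ∈ 𝓕)
    (hdistinct : (T, b) ≠ (T', b'))
    (hns : hammingDist (restrictVector f T hT) b = t)
    (hns' : hammingDist (restrictVector f' T' hT') b' = t)
    (he : inducedVector f T hT b = inducedVector f' T' hT' b') :
    (T ≠ T' ∧ f ≠ f') ∧
      hammingDist (restrictVector f T' hT') b' < t ∧
      hammingDist (restrictVector f' T hT) b < t := by
  have hne : ∀ h, restrictVector f T hT h ≠ b h := aux_all_ne hns
  have hne' : ∀ h, restrictVector f' T' hT' h ≠ b' h := aux_all_ne hns'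
  -- T ≠ T'
  have hTT' : T ≠ T' := by
    rintro rfl
    have hEq : hT = hT' := rfl
    subst hEq
    apply hdistinct
    have hb : b = b' := by
      funext h
      have hmem : ((T.orderIsoOfFin hT h : T) : Fin m) ∈ T := (T.orderIsoOfFin hT h).2
      have e1 := congrFun he (T.orderIsoOfFin hT h)
      rw [inducedVector_of_mem f T hT b hmem, inducedVector_of_mem f' T hT b' hmem] at e1
      have hsa : (T.orderIsoOfFin hT).symm ⟨((T.orderIsoOfFin hT h : T) : Fin m), hmem⟩ = h := by
        rw [show (⟨((T.orderIsoOfFin hT h : T) : Fin m), hmem⟩ : T) = T.orderIsoOfFin hT h from rfl,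
          OrderIso.symm_apply_apply]
      rwa [hsa] at e1
    rw [hb]
  -- pick i ∈ T \ T' and j ∈ T' \ T
  have hnsub : ¬ T ⊆ T' := fun hsub =>
    hTT' (Finset.eq_of_subset_of_card_le hsub (by rw [hT, hT']))
  have hnsub' : ¬ T' ⊆ T := fun hsub =>
    hTT'.symm (Finset.eq_of_subset_of_card_le hsub (by rw [hT, hT']))
  obtain ⟨i, hiT, hiT'⟩ := Finset.not_subset.mp hnsub
  obtain ⟨j, hjT', hjT⟩ := Finset.not_subset.mp hnsub'
  have ei := congrFun he i
  rw [inducedVector_of_mem f T hT b hiT, inducedVector_of_not_mem f' T' hT' b' hiT'] at ei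
  -- ei : b (symm ⟨i,hiT⟩) = f' i
  have ej := congrFun he j
  rw [inducedVector_of_not_mem f T hT b hjT, inducedVector_of_mem f' T' hT' b' hjT'] at ej
  -- ej : f j = b' (symm ⟨j,hjT'⟩)
  have hff' : f ≠ f' := by
    intro hfe
    have h1 := hne ((T.orderIsoOfFin hT).symm ⟨i, hiT⟩)
    rw [restrictVector_symm f T hT hiT] at h1
    exact h1 (by rw [hfe, ← ei])
  refine ⟨⟨hTT', hff'⟩, ?_, ?_⟩
  · exact aux_lt ((T'.orderIsoOfFin hT').symm ⟨j, hjT'⟩)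
      (by rw [restrictVector_symm f T' hT' hjT']; exact ej)
  · exact aux_lt ((T.orderIsoOfFin hT).symm ⟨i, hiT⟩)
      (by rw [restrictVector_symm f' T hT hiT]; exact ei.symm)
end

section
/- Let m, s, t, ω be integers with 1 ≤ t ≤ s ≤ m, 0 ≤ ω ≤ t and s + t − ω ≤ m. Consider the array of Construction 1 with q = 2, row index set 𝓕 = {f ∈ {0,1}^m : wt(f) = s} and column index set 𝒦 = {(T,b) : T a t-element subset of {0,...,m-1}, b ∈ {0,1}^t, wt(b) = t−ω}. Then: (i) for each column (T,b) and each e ∈ {0,1}^m, at most one row f ∈ 𝓕 gives a non-star entry in column (T,b) with induced vector e; and (ii) a vector e ∈ {0,1}^m is the induced vector of some non-star entry of the array if and only if wt(e) = s + t − 2ω. Consequently the number of distinct induced vectors of the array equals C(m, s+t−2ω). -/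
section AuxConstr1

private lemma fin2_eq_of_ne_ne {x y z : Fin 2} (hx : x ≠ z) (hy : y ≠ z) : x = y := by
  revert hx hy; revert x y z; decide

private lemma fin2_eq_of_ne0_iff {x y : Fin 2} (h : x ≠ 0 ↔ y ≠ 0) : x = y := by
  revert h; revert x y; decide

private lemma dist_all {t : ℕ} {x y : Fin t → Fin 2} (h : hammingDist x y = t) (i : Fin t) :
    x i ≠ y i := by
  intro hxy
  have hsub : (Finset.univ.filter fun j => x j ≠ y j) ⊆ Finset.univ.erase i := by
    intro j hj
    simp only [Finset.mem_filter] at hj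
    exact Finset.mem_erase.2 ⟨by rintro rfl; exact hj.2 hxy, Finset.mem_univ j⟩
  have hle := Finset.card_le_card hsub
  rw [Finset.card_erase_of_mem (Finset.mem_univ i), Finset.card_univ, Fintype.card_fin] at hle
  have ht : hammingDist x y = (Finset.univ.filter fun j => x j ≠ y j).card := rfl
  have hpos := i.isLt
  omega

private lemma card_filter_iso {m t : ℕ} (T : Finset (Fin m)) (hT : T.card = t)
    (p : Fin m → Prop) [DecidablePred p] :
    (Finset.univ.filter fun h : Fin t => p ((T.orderIsoOfFin hT h : Fin m))).card
      = (T.filter p).card := by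
  apply Finset.card_bij (fun h _ => ((T.orderIsoOfFin hT h : Fin m)))
  · intro a ha
    simp only [Finset.mem_filter, Finset.mem_univ, true_and] at ha
    exact Finset.mem_filter.2 ⟨(T.orderIsoOfFin hT a).2, ha⟩
  · intro a _ b _ hab
    exact (T.orderIsoOfFin hT).injective (Subtype.ext hab)
  · intro c hc
    simp only [Finset.mem_filter] at hc
    refine ⟨(T.orderIsoOfFin hT).symm ⟨c, hc.1⟩, Finset.mem_filter.2 ⟨Finset.mem_univ _, ?_⟩, ?_⟩
    · rw [OrderIso.apply_symm_apply]; exact hc.2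
    · rw [OrderIso.apply_symm_apply]

private lemma norm_split {m : ℕ} (T : Finset (Fin m)) (p : Fin m → Prop) [DecidablePred p] :
    (Finset.univ.filter p).card = (T.filter p).card + (Tᶜ.filter p).card := by
  rw [← Finset.union_compl T, Finset.filter_union,
    Finset.card_union_of_disjoint (Finset.disjoint_filter_filter disjoint_compl_right)]

private lemma symm_apply_coe {m t : ℕ} (T : Finset (Fin m)) (hT : T.card = t) (h : Fin t) :
    (T.orderIsoOfFin hT).symm ⟨((T.orderIsoOfFin hT h : Fin m)), (T.orderIsoOfFin hT h).2⟩ = h := by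
  have : (⟨((T.orderIsoOfFin hT h : Fin m)), (T.orderIsoOfFin hT h).2⟩ : {x // x ∈ T})
      = T.orderIsoOfFin hT h := rfl
  rw [this, OrderIso.symm_apply_apply]

end AuxConstr1
private lemma restrict_induced {m t : ℕ} (f : Fin m → Fin 2) (T : Finset (Fin m))
    (hT : T.card = t) (b : Fin t → Fin 2) :
    restrictVector (inducedVector f T hT b) T hT = b := by
  funext h
  simp only [restrictVector, inducedVector, (T.orderIsoOfFin hT h).2, dif_pos]
  rw [symm_apply_coe]

/-- For the array of Construction 1 with `q = 2`, row index set the binary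
vectors of length `m` and weight `s`, and column index set the pairs `(T,b)`
with `T` a `t`-element subset of `{0,...,m-1}` and `b ∈ {0,1}^t` of weight
`t−ω`:
(i) in each column, at most one row gives a non-star entry with a given
induced vector;
(ii) a vector `e ∈ {0,1}^m` is the induced vector of some non-star entry of
the array iff `wt(e) = s + t − 2ω`;
consequently the number of distinct induced vectors equals `C(m, s+t−2ω)`. -/
theorem construction1_weight_s_induced_vectors (m s t ω : ℕ)
    (ht : 1 ≤ t) (hts : t ≤ s) (hsm : s ≤ m) (hω : ω ≤ t) (hstw : s + t - ω ≤ m) :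
    (∀ (T : Finset (Fin m)) (hT : T.card = t) (b : Fin t → Fin 2),
      hammingNorm b = t - ω →
      ∀ f f' : Fin m → Fin 2, hammingNorm f = s → hammingNorm f' = s →
        hammingDist (restrictVector f T hT) b = t →
        hammingDist (restrictVector f' T hT) b = t →
        inducedVector f T hT b = inducedVector f' T hT b → f = f') ∧
    (∀ e : Fin m → Fin 2,
      (∃ (T : Finset (Fin m)) (hT : T.card = t) (b : Fin t → Fin 2)
          (f : Fin m → Fin 2),
        hammingNorm b = t - ω ∧ hammingNorm f = s ∧
        hammingDist (restrictVector f T hT) b = t ∧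
        inducedVector f T hT b = e) ↔ hammingNorm e = s + t - 2 * ω) ∧
    ({e : Fin m → Fin 2 |
        ∃ (T : Finset (Fin m)) (hT : T.card = t) (b : Fin t → Fin 2)
          (f : Fin m → Fin 2),
        hammingNorm b = t - ω ∧ hammingNorm f = s ∧
        hammingDist (restrictVector f T hT) b = t ∧
        inducedVector f T hT b = e}.ncard = m.choose (s + t - 2 * ω)) := by
  have hiff : ∀ e : Fin m → Fin 2,
      (∃ (T : Finset (Fin m)) (hT : T.card = t) (b : Fin t → Fin 2)
          (f : Fin m → Fin 2),
        hammingNorm b = t - ω ∧ hammingNorm f = s ∧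
        hammingDist (restrictVector f T hT) b = t ∧
        inducedVector f T hT b = e) ↔ hammingNorm e = s + t - 2 * ω := by
    intro e
    constructor
    · rintro ⟨T, hT, b, f, hb, hf, hd, rfl⟩
      -- key: f disagrees with b on T
      have key : ∀ i : Fin m, ∀ hi : i ∈ T, f i ≠ b ((T.orderIsoOfFin hT).symm ⟨i, hi⟩) := by
        intro i hi
        have := dist_all hd ((T.orderIsoOfFin hT).symm ⟨i, hi⟩)
        simpa [restrictVector, OrderIso.apply_symm_apply] using this
      -- on-T part of the induced vector
      have hbcount : (T.filter fun i => inducedVector f T hT b i ≠ 0).card = t - ω := by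
        rw [← card_filter_iso T hT]
        have : (Finset.univ.filter fun h : Fin t =>
            inducedVector f T hT b ((T.orderIsoOfFin hT h : Fin m)) ≠ 0)
            = Finset.univ.filter fun h : Fin t => b h ≠ 0 := by
          apply Finset.filter_congr
          intro h _
          have : inducedVector f T hT b ((T.orderIsoOfFin hT h : Fin m)) = b h := by
            have := congrFun (restrict_induced f T hT b) h
            simpa [restrictVector] using this
          rw [this]
        rw [this]; exact hb
      -- on-T part of f
      have hfcount : (T.filter fun i => f i ≠ 0).card = ω := by
        rw [← card_filter_iso T hT]
        have heq : (Finset.univ.filter fun h : Fin t => f ((T.orderIsoOfFin hT h : Fin m)) ≠ 0)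
            = Finset.univ.filter fun h : Fin t => ¬ (b h ≠ 0) := by
          apply Finset.filter_congr
          intro h _
          have hne : f ((T.orderIsoOfFin hT h : Fin m)) ≠ b h := by
            have := dist_all hd h
            simpa [restrictVector] using this
          constructor
          · intro h1 h2
            exact h1 (fin2_eq_of_ne_ne hne (by simpa using h2.symm) ▸ rfl)
          · intro h1
            simp only [not_not] at h1
            rw [h1] at hne
            simpa using hne
        rw [heq, Finset.filter_not, Finset.card_sdiff_of_subset (Finset.filter_subset _ _),
          Finset.card_univ, Fintype.card_fin]
        have : (Finset.univ.filter fun h : Fin t => b h ≠ 0).card = t - ω := hb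
        omega
      -- off-T parts agree
      have hoff : (Tᶜ.filter fun i => inducedVector f T hT b i ≠ 0)
          = Tᶜ.filter fun i => f i ≠ 0 := by
        apply Finset.filter_congr
        intro i hi
        rw [Finset.mem_compl] at hi
        simp [inducedVector, hi]
      have h1 : hammingNorm (inducedVector f T hT b)
          = (T.filter fun i => inducedVector f T hT b i ≠ 0).card
            + (Tᶜ.filter fun i => inducedVector f T hT b i ≠ 0).card := norm_split T _
      have h2 : hammingNorm f
          = (T.filter fun i => f i ≠ 0).card + (Tᶜ.filter fun i => f i ≠ 0).card :=
        norm_split T _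
      rw [hoff] at h1
      rw [hf] at h2
      rw [h1, hbcount]
      omega
    · intro he
      have heA : (Finset.univ.filter fun i => e i ≠ 0).card = s + t - 2 * ω := he
      have hA1 : t - ω ≤ (Finset.univ.filter fun i => e i ≠ 0).card := by omega
      obtain ⟨A1, hA1sub, hA1card⟩ := Finset.exists_subset_card_eq hA1
      have hBcard : (Finset.univ.filter fun i => ¬ (e i ≠ 0)).card = m - (s + t - 2 * ω) := by
        have := Finset.card_filter_add_card_filter_not
          (s := (Finset.univ : Finset (Fin m))) (p := fun i => e i ≠ 0)
        rw [Finset.card_univ, Fintype.card_fin] at this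
        omega
      have hB1 : ω ≤ (Finset.univ.filter fun i => ¬ (e i ≠ 0)).card := by
        rw [hBcard]; omega
      obtain ⟨B1, hB1sub, hB1card⟩ := Finset.exists_subset_card_eq hB1
      have hA1e : ∀ i ∈ A1, e i ≠ 0 := fun i hi =>
        (Finset.mem_filter.1 (hA1sub hi)).2
      have hB1e : ∀ i ∈ B1, e i = 0 := fun i hi => by
        have := (Finset.mem_filter.1 (hB1sub hi)).2
        simpa using this
      have hdisj : Disjoint A1 B1 := by
        rw [Finset.disjoint_left]
        intro i hiA hiB
        exact hA1e i hiA (hB1e i hiB)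
      set T : Finset (Fin m) := A1 ∪ B1 with hTdef
      have hT : T.card = t := by
        rw [hTdef, Finset.card_union_of_disjoint hdisj, hA1card, hB1card]; omega
      set b : Fin t → Fin 2 := restrictVector e T hT with hbdef
      set f : Fin m → Fin 2 := fun i => if i ∈ T then (if e i = 0 then 1 else 0) else e i
        with hfdef
      have hTfilter : (T.filter fun i => e i ≠ 0) = A1 := by
        ext i
        simp only [Finset.mem_filter, hTdef, Finset.mem_union]
        constructor
        · rintro ⟨hi | hi, hne⟩
          · exact hi
          · exact absurd (hB1e i hi) hne
        · intro hi
          exact ⟨Or.inl hi, hA1e i hi⟩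
      have hTfilter0 : (T.filter fun i => f i ≠ 0) = B1 := by
        ext i
        rw [Finset.mem_filter]
        constructor
        · rintro ⟨hiT, hne⟩
          rcases Finset.mem_union.1 hiT with hi | hi
          · exfalso
            apply hne
            show (if i ∈ T then (if e i = 0 then (1 : Fin 2) else 0) else e i) = 0
            rw [if_pos hiT, if_neg (hA1e i hi)]
          · exact hi
        · intro hi
          have hiT : i ∈ T := Finset.mem_union.2 (Or.inr hi)
          refine ⟨hiT, ?_⟩
          show (if i ∈ T then (if e i = 0 then (1 : Fin 2) else 0) else e i) ≠ 0
          rw [if_pos hiT, if_pos (hB1e i hi)]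
          decide
      refine ⟨T, hT, b, f, ?_, ?_, ?_, ?_⟩
      · -- hammingNorm b = t - ω
        show (Finset.univ.filter fun h => b h ≠ 0).card = t - ω
        have h1 := card_filter_iso T hT (fun i => e i ≠ 0)
        have h0 : (Finset.univ.filter fun h : Fin t => b h ≠ 0)
            = Finset.univ.filter fun h : Fin t =>
                e ((T.orderIsoOfFin hT h : Fin m)) ≠ 0 := rfl
        rw [h0, h1, hTfilter, hA1card]
      · -- hammingNorm f = s
        have h2 : hammingNorm f
            = (T.filter fun i => f i ≠ 0).card + (Tᶜ.filter fun i => f i ≠ 0).card :=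
          norm_split T _
        have h3 : (Finset.univ.filter fun i => e i ≠ 0).card
            = (T.filter fun i => e i ≠ 0).card + (Tᶜ.filter fun i => e i ≠ 0).card :=
          norm_split T _
        have hoff : (Tᶜ.filter fun i => f i ≠ 0) = Tᶜ.filter fun i => e i ≠ 0 := by
          apply Finset.filter_congr
          intro i hi
          rw [Finset.mem_compl] at hi
          simp [hfdef, hi]
        rw [h2, hTfilter0, hB1card, hoff]
        rw [heA, hTfilter, hA1card] at h3
        omega
      · -- hammingDist (restrictVector f T hT) b = t
        show (Finset.univ.filter fun h : Fin t =>
          restrictVector f T hT h ≠ b h).card = t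
        have hall : ∀ h : Fin t, restrictVector f T hT h ≠ b h := by
          intro h
          have hmem : ((T.orderIsoOfFin hT h : Fin m)) ∈ T := (T.orderIsoOfFin hT h).2
          show f ((T.orderIsoOfFin hT h : Fin m)) ≠ e ((T.orderIsoOfFin hT h : Fin m))
          simp only [hfdef, if_pos hmem]
          by_cases h0 : e ((T.orderIsoOfFin hT h : Fin m)) = 0
          · rw [if_pos h0, h0]; decide
          · rw [if_neg h0]; exact fun hc => h0 hc.symm
        rw [Finset.filter_true_of_mem fun h _ => hall h, Finset.card_univ, Fintype.card_fin]
      · -- inducedVector f T hT b = e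
        funext i
        by_cases hi : i ∈ T
        · simp only [inducedVector, dif_pos hi]
          show e (((T.orderIsoOfFin hT) ((T.orderIsoOfFin hT).symm ⟨i, hi⟩) : Fin m)) = e i
          rw [OrderIso.apply_symm_apply]
        · simp only [inducedVector, dif_neg hi, hfdef, if_neg hi]
  refine ⟨?_, hiff, ?_⟩
  · -- part (i)
    intro T hT b hb f f' hf hf' hd hd' he
    funext i
    by_cases hi : i ∈ T
    · have h1 : f i ≠ b ((T.orderIsoOfFin hT).symm ⟨i, hi⟩) := by
        have := dist_all hd ((T.orderIsoOfFin hT).symm ⟨i, hi⟩)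
        simpa [restrictVector, OrderIso.apply_symm_apply] using this
      have h2 : f' i ≠ b ((T.orderIsoOfFin hT).symm ⟨i, hi⟩) := by
        have := dist_all hd' ((T.orderIsoOfFin hT).symm ⟨i, hi⟩)
        simpa [restrictVector, OrderIso.apply_symm_apply] using this
      exact fin2_eq_of_ne_ne h1 h2
    · have := congrFun he i
      simpa [inducedVector, hi] using this
  · -- part (iii)
    have hset : {e : Fin m → Fin 2 |
        ∃ (T : Finset (Fin m)) (hT : T.card = t) (b : Fin t → Fin 2)
          (f : Fin m → Fin 2),
        hammingNorm b = t - ω ∧ hammingNorm f = s ∧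
        hammingDist (restrictVector f T hT) b = t ∧
        inducedVector f T hT b = e}
        = ↑(Finset.univ.filter fun e : Fin m → Fin 2 => hammingNorm e = s + t - 2 * ω) := by
      ext e
      simp only [Set.mem_setOf_eq, Finset.coe_filter, Finset.mem_univ, true_and,
        Set.mem_setOf_eq]
      exact hiff e
    rw [hset, Set.ncard_coe_finset]
    have hcard : (Finset.univ.filter fun e : Fin m → Fin 2 =>
        hammingNorm e = s + t - 2 * ω).card
        = (Finset.powersetCard (s + t - 2 * ω) (Finset.univ : Finset (Fin m))).card := by
      apply Finset.card_bij (fun e _ => Finset.univ.filter fun i => e i ≠ 0)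
      · intro e hegood
        simp only [Finset.mem_filter, Finset.mem_univ, true_and] at hegood
        exact Finset.mem_powersetCard.2 ⟨Finset.filter_subset _ _ |>.trans
          (Finset.subset_univ _), hegood⟩
      · intro e1 h1 e2 h2 heq
        funext i
        have := Finset.ext_iff.1 heq i
        simp only [Finset.mem_filter, Finset.mem_univ, true_and] at this
        exact fin2_eq_of_ne0_iff this
      · intro A hA
        rw [Finset.mem_powersetCard] at hA
        refine ⟨fun i => if i ∈ A then 1 else 0, ?_, ?_⟩
        · simp only [Finset.mem_filter, Finset.mem_univ, true_and]
          show (Finset.univ.filter fun i =>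
            (if i ∈ A then (1 : Fin 2) else 0) ≠ 0).card = s + t - 2 * ω
          have : (Finset.univ.filter fun i =>
              (if i ∈ A then (1 : Fin 2) else 0) ≠ 0) = A := by
            ext i
            simp only [Finset.mem_filter, Finset.mem_univ, true_and]
            by_cases hi : i ∈ A
            · simp [hi]
            · simp [hi]
          rw [this, hA.2]
        · ext i
          simp only [Finset.mem_filter, Finset.mem_univ, true_and]
          by_cases hi : i ∈ A
          · simp [hi]
          · simp [hi]
    rw [hcard, Finset.card_powersetCard, Finset.card_univ, Fintype.card_fin]
end

section
/- Let q ≥ 2, 1 ≤ t ≤ m, F ≥ 1 and 0 ≤ Z ≤ F be integers, and let M be an F×m array with entries in {0,...,q-1}. The following are equivalent: (i) for every t-element subset T = {δ_0 < ... < δ_{t-1}} of {0,...,m-1} and every b ∈ {0,...,q-1}^t, the number of rows f of M with f_{δ_h} ≠ b_h for all h ∈ {0,...,t-1} equals F − Z (equivalently, every column of the array of Construction 1 with row index matrix M and full column index set contains exactly Z stars); (ii) (q−1)^t divides F − Z and M is an orthogonal array OA_λ(F,m,q,t) with index λ = (F−Z)/(q−1)^t. -/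
/-!
Write `N(A, B)` for the number of rows that differ from `b` at every coordinate of `A` and agree
with `b` at every coordinate of `B`. Splitting the rows according to their entry at a further
coordinate `j` gives `N(A, B) = N(A ∪ {j}, B) + N(A, B ∪ {j})`, and summing over the value of `b`
at `j` gives `∑ N(A, B ∪ {j}) = N(A, B)` and `∑ N(A ∪ {j}, B) = (q - 1) N(A, B)`.

Either side of the equivalence fixes the pure counts `N(T, ∅)` resp. `N(∅, S)` on `t`-sets; the
summation identities propagate them down to all smaller sets, and the splitting identity then
yields every mixed count: `N(A, B) = λ q^(t - |A| - |B|) (q - 1)^|A|` for disjoint `A`, `B`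
with `|A| + |B| ≤ t`. Divisibility comes from `(q - 1)^t N(∅, ∅) = (F - Z) q^t` and
`gcd(q - 1, q) = 1`.
-/

open Finset Function

/-- An `F × m` array `M` with entries in `{0,...,q-1}` is an orthogonal array
`OA_λ(F,m,q,s)` of strength `s` and index `lam` if for every `s`-element subset
`S` of the column indices, every assignment of values to the coordinates in `S`
occurs exactly `lam` times among the rows of `M` restricted to `S`. -/
def IsOA (F m q s lam : ℕ) (M : Fin F → Fin m → Fin q) : Prop :=
  ∀ S : Finset (Fin m), S.card = s → ∀ v : Fin m → Fin q,
    {r : Fin F | ∀ i ∈ S, M r i = v i}.ncard = lam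

section Generic

variable {α β : Type*} [DecidableEq α]

theorem update_apply_eq_of_notMem {s : Finset α} {j : α} (hj : j ∉ s) (b : α → β) (a : β) :
    ∀ i ∈ s, update b j a i = b i :=
  fun _ hi => update_of_ne (ne_of_mem_of_not_mem hi hj) _ _

theorem pow_mul_eq_of_sum_update_insert [Fintype α] [Fintype β] {c : Finset α → (α → β) → ℕ}
    {k W t : ℕ} (ht : t ≤ Fintype.card α)
    (hsum : ∀ A b j, j ∉ A → ∑ a, c (insert j A) (update b j a) = k * c A b)
    (htop : ∀ T : Finset α, #T = t → ∀ b, c T b = W)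
    (n : ℕ) (A : Finset α) (hA : #A + n = t) (b : α → β) :
    k ^ n * c A b = W * Fintype.card β ^ n := by
  induction n generalizing A b with
  | zero => simpa using htop A hA b
  | succ n ih =>
    obtain ⟨j, -, hj⟩ := exists_mem_notMem_of_card_lt_card (s := A) (t := univ) (by
      rw [card_univ]; omega)
    have hcard : #(insert j A) + n = t := by rw [card_insert_of_notMem hj]; omega
    calc k ^ (n + 1) * c A b = k ^ n * ∑ a, c (insert j A) (update b j a) := by
          rw [hsum A b j hj]; ring
      _ = ∑ _a : β, W * Fintype.card β ^ n := by
          rw [mul_sum]; exact sum_congr rfl fun a _ => ih _ hcard _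
      _ = W * Fintype.card β ^ (n + 1) := by
          rw [sum_const, card_univ, smul_eq_mul]; ring

theorem eq_of_eq_insert_add_insert {N : Finset α → Finset α → ℕ} {g : ℕ → ℕ → ℕ} {t : ℕ}
    (hN : ∀ j A B, j ∉ A → j ∉ B → N A B = N (insert j A) B + N A (insert j B))
    (hg : ∀ a c, a + c < t → g a c = g (a + 1) c + g a (c + 1))
    (hbase : ∀ A : Finset α, #A ≤ t → N A ∅ = g #A 0)
    {A B : Finset α} (hAB : Disjoint A B) (hcard : #A + #B ≤ t) :
    N A B = g #A #B := by
  induction B using Finset.induction_on generalizing A with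
  | empty => simpa using hbase A (by simpa using hcard)
  | @insert j B hjB ih =>
    rw [disjoint_insert_right] at hAB
    rw [card_insert_of_notMem hjB] at hcard ⊢
    have hsplit := hN j A B hAB.1 hjB
    rw [ih hAB.2 (by omega), ih (disjoint_insert_left.2 ⟨hjB, hAB.2⟩)
      (by rw [card_insert_of_notMem hAB.1]; omega), card_insert_of_notMem hAB.1] at hsplit
    have := hg #A #B (by omega)
    omega

end Generic

def expectedMixedCount (lam q t a c : ℕ) : ℕ :=
  lam * q ^ (t - a - c) * (q - 1) ^ a

theorem expectedMixedCount_eq_add {lam q t a c : ℕ} (hq : 0 < q) (h : a + c < t) :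
    expectedMixedCount lam q t a c =
      expectedMixedCount lam q t (a + 1) c + expectedMixedCount lam q t a (c + 1) := by
  obtain ⟨p, rfl⟩ : ∃ p, q = p + 1 := ⟨q - 1, by omega⟩
  obtain ⟨e, he⟩ : ∃ e, t - a - c = e + 1 := ⟨t - a - c - 1, by omega⟩
  rw [expectedMixedCount, expectedMixedCount, expectedMixedCount, he,
    show t - (a + 1) - c = e by omega, show t - a - (c + 1) = e by omega, Nat.add_sub_cancel]
  ring

section MixedCount

variable {ι α β : Type*} [Fintype ι] [DecidableEq β]

def mixedCount (M : ι → α → β) (A B : Finset α) (b : α → β) : ℕ :=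
  #{r | (∀ i ∈ A, M r i ≠ b i) ∧ ∀ i ∈ B, M r i = b i}

theorem ncard_avoid_eq_mixedCount (M : ι → α → β) (A : Finset α) (b : α → β) :
    {r | ∀ i ∈ A, M r i ≠ b i}.ncard = mixedCount M A ∅ b := by
  rw [mixedCount, ← Set.ncard_coe_finset, coe_filter_univ]
  simp

theorem ncard_agree_eq_mixedCount (M : ι → α → β) (B : Finset α) (b : α → β) :
    {r | ∀ i ∈ B, M r i = b i}.ncard = mixedCount M ∅ B b := by
  rw [mixedCount, ← Set.ncard_coe_finset, coe_filter_univ]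
  simp

variable [DecidableEq α]

theorem mixedCount_eq_insert_add_insert (M : ι → α → β) (A B : Finset α) (b : α → β) (j : α) :
    mixedCount M A B b = mixedCount M (insert j A) B b + mixedCount M A (insert j B) b := by
  unfold mixedCount
  rw [← card_filter_add_card_filter_not (fun r => M r j ≠ b j), filter_filter, filter_filter]
  congr 2 <;> ext r <;> simp only [mem_filter, forall_mem_insert] <;> tauto

theorem mixedCount_update_of_notMem (M : ι → α → β) {A B : Finset α} {j : α} (hA : j ∉ A)
    (hB : j ∉ B) (b : α → β) (a : β) :
    mixedCount M A B (update b j a) = mixedCount M A B b := by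
  refine congrArg card (filter_congr fun r _ => ?_)
  simp +contextual only [update_apply_eq_of_notMem hA, update_apply_eq_of_notMem hB]

theorem sum_mixedCount_insert_right [Fintype β] (M : ι → α → β) {A B : Finset α} {j : α}
    (hA : j ∉ A) (hB : j ∉ B) (b : α → β) :
    ∑ a, mixedCount M A (insert j B) (update b j a) = mixedCount M A B b := by
  rw [mixedCount, card_eq_sum_card_fiberwise (f := fun r => M r j) (t := univ)
    (fun _ _ => mem_coe.2 (mem_univ _))]
  refine sum_congr rfl fun a _ => ?_
  rw [mixedCount, filter_filter]
  refine congrArg card (filter_congr fun r _ => ?_)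
  simp +contextual only [forall_mem_insert, update_self, update_apply_eq_of_notMem hA,
    update_apply_eq_of_notMem hB]
  tauto

theorem sum_mixedCount_insert_left [Fintype β] (M : ι → α → β) {A B : Finset α} {j : α}
    (hA : j ∉ A) (hB : j ∉ B) (b : α → β) :
    ∑ a, mixedCount M (insert j A) B (update b j a) =
      (Fintype.card β - 1) * mixedCount M A B b := by
  have hsplit := sum_congr rfl fun a (_ : a ∈ univ) =>
    mixedCount_eq_insert_add_insert M A B (update b j a) j
  simp only [mixedCount_update_of_notMem M hA hB, sum_const, card_univ, smul_eq_mul,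
    sum_add_distrib, sum_mixedCount_insert_right M hA hB] at hsplit
  rw [Nat.sub_one_mul]
  omega

theorem pow_sub_one_dvd_of_mixedCount_eq [Fintype α] [Fintype β] {M : ι → α → β} {t W : ℕ}
    (hβ : 0 < Fintype.card β) (ht : t ≤ Fintype.card α)
    (h : ∀ T : Finset α, #T = t → ∀ b, mixedCount M T ∅ b = W) :
    (Fintype.card β - 1) ^ t ∣ W := by
  have : Nonempty β := Fintype.card_pos_iff.1 hβ
  have hcount := pow_mul_eq_of_sum_update_insert ht
    (fun A b j hj => sum_mixedCount_insert_left M hj (notMem_empty j) b) h t ∅ (by simp)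
    (fun _ => Classical.arbitrary β)
  have hcop : Nat.Coprime ((Fintype.card β - 1) ^ t) (Fintype.card β ^ t) :=
    ((Nat.coprime_self_sub_left hβ).2 (Nat.coprime_one_left _)).pow t t
  exact hcop.dvd_of_dvd_mul_right ⟨_, hcount.symm⟩

theorem mixedCount_eq_of_avoid [Fintype α] [Fintype β] {M : ι → α → β} {t lam : ℕ}
    (hβ : 1 < Fintype.card β) (ht : t ≤ Fintype.card α)
    (h : ∀ T : Finset α, #T = t → ∀ b, mixedCount M T ∅ b = lam * (Fintype.card β - 1) ^ t)
    {A B : Finset α} (hAB : Disjoint A B) (hcard : #A + #B ≤ t) (b : α → β) :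
    mixedCount M A B b = expectedMixedCount lam (Fintype.card β) t #A #B := by
  refine eq_of_eq_insert_add_insert (fun j A B _ _ => mixedCount_eq_insert_add_insert M A B b j)
    (fun a c hac => expectedMixedCount_eq_add (by omega) hac) (fun A hA => ?_) hAB hcard
  have hcount := pow_mul_eq_of_sum_update_insert ht
    (fun A b j hj => sum_mixedCount_insert_left M hj (notMem_empty j) b) h (t - #A) A
    (by omega) b
  have hsplit : (Fintype.card β - 1) ^ t =
      (Fintype.card β - 1) ^ (t - #A) * (Fintype.card β - 1) ^ #A := by
    rw [← pow_add, Nat.sub_add_cancel hA]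
  rw [hsplit] at hcount
  refine Nat.eq_of_mul_eq_mul_left (pow_pos (Nat.sub_pos_of_lt hβ) (t - #A)) ?_
  rw [hcount, expectedMixedCount, Nat.sub_zero]
  ring

theorem mixedCount_eq_of_agree [Fintype α] [Fintype β] {M : ι → α → β} {t lam : ℕ}
    (hβ : 0 < Fintype.card β) (ht : t ≤ Fintype.card α)
    (h : ∀ S : Finset α, #S = t → ∀ b, mixedCount M ∅ S b = lam)
    {A B : Finset α} (hAB : Disjoint A B) (hcard : #A + #B ≤ t) (b : α → β) :
    mixedCount M A B b = expectedMixedCount lam (Fintype.card β) t #A #B := by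
  refine eq_of_eq_insert_add_insert (t := t) (N := fun B A => mixedCount M A B b)
    (g := fun c a => expectedMixedCount lam (Fintype.card β) t a c)
    (fun j B A _ _ => (mixedCount_eq_insert_add_insert M A B b j).trans (add_comm _ _))
    (fun c a hca => (expectedMixedCount_eq_add hβ (by omega)).trans (add_comm _ _))
    (fun B hB => ?_) hAB.symm (by omega)
  have hcount := pow_mul_eq_of_sum_update_insert (k := 1) ht
    (fun B b j hj => (sum_mixedCount_insert_right M (notMem_empty j) hj b).trans
      (one_mul _).symm) h (t - #B) B (by omega) b
  simpa [expectedMixedCount] using hcount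

end MixedCount

theorem column_stars_iff_OA_general (q m t F Z : ℕ)
    (hq : 2 ≤ q) (htm : t ≤ m)
    (M : Fin F → Fin m → Fin q) :
    (∀ T : Finset (Fin m), T.card = t → ∀ b : Fin m → Fin q,
        {r : Fin F | ∀ i ∈ T, M r i ≠ b i}.ncard = F - Z) ↔
      ((q - 1) ^ t ∣ F - Z ∧ IsOA F m q t ((F - Z) / (q - 1) ^ t) M) := by
  have hβ : 1 < Fintype.card (Fin q) := by simpa
  have hα : t ≤ Fintype.card (Fin m) := by simpa
  simp only [IsOA, ncard_avoid_eq_mixedCount, ncard_agree_eq_mixedCount]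
  constructor
  · intro h
    have hdvd : (q - 1) ^ t ∣ F - Z := by
      simpa using pow_sub_one_dvd_of_mixedCount_eq hβ.le hα h
    refine ⟨hdvd, fun S hS v => ?_⟩
    have hW : F - Z = (F - Z) / (q - 1) ^ t * (Fintype.card (Fin q) - 1) ^ t := by
      rw [Fintype.card_fin, Nat.div_mul_cancel hdvd]
    rw [mixedCount_eq_of_avoid hβ hα (hW ▸ h) (disjoint_empty_left S) (by simp [hS]) v]
    simp [expectedMixedCount, hS]
  · rintro ⟨hdvd, hOA⟩ T hT b
    rw [mixedCount_eq_of_agree hβ.le hα hOA (disjoint_empty_right T) (by simp [hT]) b]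
    simp [expectedMixedCount, hT, Nat.div_mul_cancel hdvd]

/-- Theorem 3: let `q ≥ 2`, `1 ≤ t ≤ m`, `F ≥ 1`, `Z ≤ F`, and let `M` be an
`F × m` array over `{0,...,q-1}`.  Every column of the array of Construction 1
with row index matrix `M` and full column index set contains exactly `Z` stars
(i.e. for every `t`-element subset `T` of the coordinates and every assignment
`b` of values to the coordinates in `T`, exactly `F − Z` rows of `M` differ
from `b` on every coordinate of `T`) if and only if `(q−1)^t` divides `F − Z`
and `M` is an orthogonal array `OA_λ(F,m,q,t)` with `λ = (F−Z)/(q−1)^t`. -/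
theorem column_stars_iff_OA (q m t F Z : ℕ)
    (hq : 2 ≤ q) (ht : 1 ≤ t) (htm : t ≤ m) (hF : 1 ≤ F) (hZ : Z ≤ F)
    (M : Fin F → Fin m → Fin q) :
    (∀ T : Finset (Fin m), T.card = t → ∀ b : Fin m → Fin q,
        {r : Fin F | ∀ i ∈ T, M r i ≠ b i}.ncard = F - Z) ↔
      ((q - 1) ^ t ∣ F - Z ∧ IsOA F m q t ((F - Z) / (q - 1) ^ t) M) :=
  column_stars_iff_OA_general q m t F Z hq htm M
end

section
/- Let q ≥ 2 and 1 ≤ t ≤ m be integers, and let M be an F×m array with entries in {0,...,q-1} that is an orthogonal array OA_λ(F,m,q,t) for some λ ≥ 1. Suppose that for every e ∈ {0,...,q-1}^m the quantity N(e,T) does not depend on the choice of the t-element subset T of {0,...,m-1} (this is equivalent to every symbol of the PDA generated by Construction 1 from M with full column index set occurring exactly C(m,t) times, i.e. to the coded gain being C(m,t)). Then: (1) M is a covering array CA(F,m,q,m−t), i.e. for every (m−t)-element subset S of {0,...,m-1}, every vector in {0,...,q-1}^{m−t} occurs at least once among the rows of M restricted to the coordinates in S; and (2) F ≥ q^{m−t}.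 -/
/-- `Ncount M e T` is `N(e,T)`: the number of rows `f` of `M` with `f_i = e_i`
for all `i ∉ T` and `f_i ≠ e_i` for all `i ∈ T`, i.e. the number of times the
vector `e` is induced in column `(T, e|_T)` of the array of Construction 1
built from `M` with full column index set. -/
noncomputable def Ncount {F m q : ℕ} (M : Fin F → Fin m → Fin q) (e : Fin m → Fin q)
    (T : Finset (Fin m)) : ℕ :=
  {r : Fin F | (∀ i ∉ T, M r i = e i) ∧ (∀ i ∈ T, M r i ≠ e i)}.ncard

open Finset

def IsCA (F m q s : ℕ) (M : Fin F → Fin m → Fin q) : Prop :=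
  ∀ S : Finset (Fin m), S.card = s → ∀ v : Fin m → Fin q, ∃ r : Fin F, ∀ i ∈ S, M r i = v i

theorem IsCA.pow_le {F m q s : ℕ} {M : Fin F → Fin m → Fin q} (hCA : IsCA F m q s M)
    (hq : 0 < q) (hs : s ≤ m) : q ^ s ≤ F := by
  obtain ⟨S, -, hS⟩ := exists_subset_card_eq (s := (univ : Finset (Fin m))) (by simpa using hs)
  have hsurj : Function.Surjective fun (r : Fin F) (i : S) => M r i := by
    intro w
    obtain ⟨r, hr⟩ := hCA S hS fun i => if h : i ∈ S then w ⟨i, h⟩ else ⟨0, hq⟩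
    exact ⟨r, funext fun i => by simpa [i.2] using hr i i.2⟩
  simpa [hS] using Fintype.card_le_of_surjective _ hsurj

theorem IsOA.nonempty {F m q s lam : ℕ} {M : Fin F → Fin m → Fin q} (hOA : IsOA F m q s lam M)
    (hq : 0 < q) (hs : s ≤ m) (hlam : lam ≠ 0) : Nonempty (Fin F) := by
  obtain ⟨S, -, hS⟩ := exists_subset_card_eq (s := (univ : Finset (Fin m))) (by simpa using hs)
  have := hOA S hS fun _ => ⟨0, hq⟩
  obtain ⟨r, -⟩ := Set.nonempty_of_ncard_ne_zero (this ▸ hlam)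
  exact ⟨r⟩

section

variable {F m q t : ℕ} {M : Fin F → Fin m → Fin q}

theorem ncount_pos_iff {e : Fin m → Fin q} {T : Finset (Fin m)} :
    0 < Ncount M e T ↔ ∃ r, (∀ i ∉ T, M r i = e i) ∧ ∀ i ∈ T, M r i ≠ e i := by
  rw [Ncount, Set.ncard_pos (Set.toFinite _)]
  rfl

variable (hN : ∀ e : Fin m → Fin q, ∀ T T' : Finset (Fin m),
  T.card = t → T'.card = t → Ncount M e T = Ncount M e T')
include hN

theorem exists_row_update_of_ncount_eq (ht : 1 ≤ t) {T : Finset (Fin m)} (hT : T.card = t)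
    (r : Fin F) {a : Fin m} (ha : a ∉ T) (x : Fin q) :
    ∃ r', M r' a = x ∧ ∀ i ∉ T, i ≠ a → M r' i = M r i := by
  by_cases hx : M r a = x
  · exact ⟨r, hx, fun _ _ _ => rfl⟩
  have := nontrivial_of_ne _ _ hx
  choose y hy using fun i => exists_ne (M r i)
  obtain ⟨P, hPT, hP⟩ := exists_subset_card_eq (s := T) (n := t - 1) (by omega)
  have haP : a ∉ P := fun h => ha (hPT h)
  let e : Fin m → Fin q := Function.update (fun i => if i ∈ P then y i else M r i) a x
  have hr : 0 < Ncount M e (insert a P) := by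
    refine ncount_pos_iff.2 ⟨r, fun i hi => ?_, fun i hi => ?_⟩
    · simp_all [e]
    · rcases mem_insert.1 hi with rfl | hiP
      · simpa [e] using hx
      · simpa [e, ne_of_mem_of_not_mem hiP haP, hiP] using (hy i).symm
  rw [hN e _ T (by rw [card_insert_of_notMem haP]; omega) hT] at hr
  obtain ⟨r', hr', -⟩ := ncount_pos_iff.1 hr
  refine ⟨r', by simpa [e] using hr' a ha, fun i hi hia => ?_⟩
  have hiP : i ∉ P := fun h => hi (hPT h)
  simpa [e, hia, hiP] using hr' i hi

theorem exists_row_eq_ite_of_ncount_eq (ht : 1 ≤ t) {T : Finset (Fin m)} (hT : T.card = t)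
    (r : Fin F) (v : Fin m → Fin q) (A : Finset (Fin m)) :
    ∃ r', ∀ i ∉ T, M r' i = if i ∈ A then v i else M r i := by
  induction A using Finset.induction_on with
  | empty => exact ⟨r, fun _ _ => by simp⟩
  | @insert a A _ ih =>
    obtain ⟨r₁, hr₁⟩ := ih
    by_cases haT : a ∈ T
    · refine ⟨r₁, fun i hi => ?_⟩
      simpa [ne_of_mem_of_not_mem haT hi |>.symm] using hr₁ i hi
    obtain ⟨r₂, hr₂a, hr₂⟩ := exists_row_update_of_ncount_eq hN ht hT r₁ haT (v a)
    refine ⟨r₂, fun i hi => ?_⟩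
    by_cases hia : i = a
    · simp [hia, hr₂a]
    · simpa [hia, hr₂ i hi hia] using hr₁ i hi

theorem exists_row_eq_off_of_ncount_eq [Nonempty (Fin F)] (ht : 1 ≤ t) {T : Finset (Fin m)}
    (hT : T.card = t) (v : Fin m → Fin q) : ∃ r, ∀ i ∉ T, M r i = v i := by
  obtain ⟨r, hr⟩ := exists_row_eq_ite_of_ncount_eq hN ht hT (Classical.arbitrary _) v univ
  exact ⟨r, fun i hi => by simpa using hr i hi⟩

end

/-- Theorem 4: let `q ≥ 2`, `1 ≤ t ≤ m`, and let `M` be an `F × m` array over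
`{0,...,q-1}` which is an orthogonal array `OA_λ(F,m,q,t)` for some `λ ≥ 1`.
If for every `e ∈ {0,...,q-1}^m` the quantity `N(e,T)` does not depend on the
`t`-element subset `T` (equivalently, the coded gain of the PDA generated by
Construction 1 from `M` with full column index set is `C(m,t)`), then `M` is a
covering array `CA(F,m,q,m−t)`, and consequently `F ≥ q^{m−t}`. -/
theorem coveringArray_of_max_gain (q m t F lam : ℕ)
    (hq : 2 ≤ q) (ht : 1 ≤ t) (htm : t ≤ m) (hlam : 1 ≤ lam)
    (M : Fin F → Fin m → Fin q) (hOA : IsOA F m q t lam M)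
    (hN : ∀ e : Fin m → Fin q, ∀ T T' : Finset (Fin m),
      T.card = t → T'.card = t → Ncount M e T = Ncount M e T') :
    (∀ S : Finset (Fin m), S.card = m - t → ∀ v : Fin m → Fin q,
        ∃ r : Fin F, ∀ i ∈ S, M r i = v i) ∧
      q ^ (m - t) ≤ F := by
  have := hOA.nonempty (by omega) htm (by omega)
  have hCA : IsCA F m q (m - t) M := by
    intro S hS v
    have hSc : Sᶜ.card = t := by rw [card_compl, hS, Fintype.card_fin]; omega
    obtain ⟨r, hr⟩ := exists_row_eq_off_of_ncount_eq hN ht hSc v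
    exact ⟨r, fun i hi => hr i (notMem_compl.2 hi)⟩
  exact ⟨hCA, hCA.pow_le (by omega) (Nat.sub_le m t)⟩
end

section
/- Let q ≥ 2 and 1 ≤ t ≤ m be integers, and let M be an F×m array with entries in {0,...,q-1} that is an orthogonal array OA_λ(F,m,q,t) (so F = λq^t). Define S* = Σ_{e ∈ {0,...,q-1}^m} max_T N(e,T), where the maximum is over all t-element subsets T of {0,...,m-1}; S* is the number of distinct symbols of the PDA generated by Construction 1 from M with full column index set, so the associated transmission load is R = S*/F. Then S* ≥ F·(q−1)^t (equivalently R ≥ (q−1)^t). Moreover, if S* = F·(q−1)^t, then F ≥ q^{m−t}. -/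
/-!
Each row of `M` is counted in `N(e,T)` for exactly `(q-1)^|T|` vectors `e`, so
`Σ_e N(e,T) = F (q-1)^t` for every `t`-set `T`, and `S*` dominates this sum.

If `S*` attains it, then `N(e,T) ≤ N(e,T₀)` for all `e` and all `t`-sets `T`. Take a row `r`,
a coordinate `i ∉ T₀`, a `(t-1)`-set `V ⊆ T₀`, and let `e` agree with `r` off `V ∪ {i}`, take a
prescribed new value at `i` and differ from `r` on `V`. Then `r` is counted in `N(e, V ∪ {i})`,
so some row is counted in `N(e,T₀)`, and that row agrees with `r` off `T₀` except at `i`.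
Hence the patterns shown by the rows off `T₀` form a nonempty set closed under changing one
coordinate: all `q^(m-t)` of them occur, and `F ≥ q^(m-t)`.
-/

open Finset Function

theorem Function.forall_of_update_closed {ι α : Type*} [Fintype ι] [DecidableEq ι]
    {P : (ι → α) → Prop} (hP : ∀ x i a, P x → P (update x i a)) {x₀ : ι → α} (h₀ : P x₀)
    (x : ι → α) : P x := by
  suffices ∀ s : Finset ι, P (s.piecewise x x₀) by simpa using this univ
  intro s
  induction s using Finset.induction_on with
  | empty => simpa
  | insert i s _ ih => rw [piecewise_insert]; exact hP _ _ _ ih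

theorem card_filter_eq_off_ne_on {ι α : Type*} [Fintype ι] [DecidableEq ι] [Fintype α]
    [DecidableEq α] (x : ι → α) (T : Finset ι) :
    #{e : ι → α | (∀ i ∉ T, x i = e i) ∧ ∀ i ∈ T, x i ≠ e i} = (Fintype.card α - 1) ^ #T := by
  have : ({e | (∀ i ∉ T, x i = e i) ∧ ∀ i ∈ T, x i ≠ e i} : Finset (ι → α)) =
      Fintype.piFinset fun i => if i ∈ T then {x i}ᶜ else {x i} := by
    ext e
    simp only [mem_filter, mem_univ, true_and, Fintype.mem_piFinset]
    refine ⟨fun ⟨hoff, hon⟩ i => ?_, fun h => ⟨fun i hi => ?_, fun i hi => ?_⟩⟩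
    · split_ifs with hi
      · simpa [eq_comm] using hon i hi
      · simpa [eq_comm] using hoff i hi
    · simpa [hi, eq_comm] using h i
    · simpa [hi, eq_comm] using h i
  rw [this, Fintype.card_piFinset]
  simp only [apply_ite card, card_compl, card_singleton]
  rw [prod_ite_mem, univ_inter, prod_const]

variable {F m q : ℕ} (M : Fin F → Fin m → Fin q)

theorem ncount_eq_card (e : Fin m → Fin q) (T : Finset (Fin m)) :
    Ncount M e T = #{r | (∀ i ∉ T, M r i = e i) ∧ ∀ i ∈ T, M r i ≠ e i} := by
  rw [Ncount, ← Set.ncard_coe_finset, coe_filter]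
  simp

theorem sum_ncount (T : Finset (Fin m)) : ∑ e, Ncount M e T = F * (q - 1) ^ #T := by
  simp only [ncount_eq_card, card_filter]
  rw [sum_comm]
  calc _ = ∑ r : Fin F, (q - 1) ^ #T := sum_congr rfl fun r _ => by
          rw [← card_filter]; simpa using card_filter_eq_off_ne_on (M r) T
    _ = F * (q - 1) ^ #T := by simp

theorem mul_pow_le_sum_sup_ncount {t : ℕ} {T₀ : Finset (Fin m)} (hT₀ : #T₀ = t) :
    F * (q - 1) ^ t ≤
      ∑ e, ({T | #T = t} : Finset (Finset (Fin m))).sup fun T => Ncount M e T :=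
  calc F * (q - 1) ^ t = ∑ e, Ncount M e T₀ := by rw [sum_ncount, hT₀]
    _ ≤ _ := sum_le_sum fun e _ => le_sup (f := fun T => Ncount M e T) (by simpa using hT₀)

theorem ncount_le_of_sum_sup_ncount_eq {t : ℕ}
    (hS : ∑ e, ({T | #T = t} : Finset (Finset (Fin m))).sup (fun T => Ncount M e T) =
      F * (q - 1) ^ t)
    {T₀ : Finset (Fin m)} (hT₀ : #T₀ = t) (e : Fin m → Fin q) {T : Finset (Fin m)}
    (hT : #T = t) : Ncount M e T ≤ Ncount M e T₀ := by
  have hle : ∀ T : Finset (Fin m), #T = t → ∀ e,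
      Ncount M e T ≤ ({T | #T = t} : Finset (Finset (Fin m))).sup fun T => Ncount M e T :=
    fun T hT e => le_sup (f := fun T => Ncount M e T) (by simpa using hT)
  have hmax : Ncount M e T₀ = ({T | #T = t} : Finset (Finset (Fin m))).sup fun T => Ncount M e T :=
    (sum_eq_sum_iff_of_le fun e _ => hle T₀ hT₀ e).1 (by rw [sum_ncount, hT₀, hS]) e (mem_univ e)
  exact hmax ▸ hle T hT e

theorem exists_row_eq_update_off {t : ℕ} (hq : 2 ≤ q) (ht : 1 ≤ t) {T₀ : Finset (Fin m)}
    (hT₀ : #T₀ = t) (hdom : ∀ e T, #T = t → Ncount M e T ≤ Ncount M e T₀) (r : Fin F)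
    {i : Fin m} (hi : i ∉ T₀) {a : Fin q} (ha : a ≠ M r i) :
    ∃ f, ∀ j ∉ T₀, M f j = update (M r) i a j := by
  have : Nontrivial (Fin q) := Fin.nontrivial_iff_two_le.2 hq
  choose c hc using fun j => exists_ne (M r j)
  obtain ⟨V, hVT₀, hV⟩ := exists_subset_card_eq (show t - 1 ≤ #T₀ by omega)
  have hiV : i ∉ V := fun h => hi (hVT₀ h)
  set e := update (V.piecewise c (M r)) i a
  have hr : r ∈ ({r | (∀ j ∉ insert i V, M r j = e j) ∧ ∀ j ∈ insert i V, M r j ≠ e j} :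
      Finset (Fin F)) := by
    simp only [mem_filter, mem_univ, true_and, mem_insert, not_or]
    refine ⟨fun j ⟨hji, hjV⟩ => ?_, fun j hj => ?_⟩
    · simp [e, hji, hjV]
    · rcases hj with rfl | hjV
      · simpa [e] using ha.symm
      · simpa [e, ne_of_mem_of_not_mem hjV hiV, hjV] using (hc j).symm
  have hpos : 0 < Ncount M e T₀ := by
    refine lt_of_lt_of_le ?_ (hdom e _ (by rw [card_insert_of_notMem hiV, hV]; omega))
    rw [ncount_eq_card]
    exact card_pos.2 ⟨r, hr⟩
  rw [ncount_eq_card] at hpos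
  obtain ⟨f, hf⟩ := card_pos.1 hpos
  refine ⟨f, fun j hj => ?_⟩
  have hjV : j ∉ V := fun h => hj (hVT₀ h)
  rw [(mem_filter.1 hf).2.1 j hj]
  by_cases hji : j = i
  · subst hji; simp [e]
  · simp [e, hji, hjV]

theorem exists_row_eq_off {t : ℕ} (hq : 2 ≤ q) (ht : 1 ≤ t) {T₀ : Finset (Fin m)}
    (hT₀ : #T₀ = t) (hdom : ∀ e T, #T = t → Ncount M e T ≤ Ncount M e T₀) (r₀ : Fin F)
    (u : Fin m → Fin q) : ∃ r, ∀ j ∉ T₀, M r j = u j := by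
  refine forall_of_update_closed (P := fun u => ∃ r, ∀ j ∉ T₀, M r j = u j) ?_
    ⟨r₀, fun _ _ => rfl⟩ u
  rintro u i a ⟨r, hr⟩
  by_cases hi : i ∈ T₀
  · exact ⟨r, fun j hj => by rw [update_of_ne (ne_of_mem_of_not_mem hi hj).symm, hr j hj]⟩
  by_cases ha : a = u i
  · exact ⟨r, by rwa [ha, update_eq_self]⟩
  obtain ⟨f, hf⟩ := exists_row_eq_update_off M hq ht hT₀ hdom r hi (a := a) (by rwa [hr i hi])
  refine ⟨f, fun j hj => ?_⟩
  rw [hf j hj]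
  by_cases hji : j = i
  · subst hji; simp
  · simp [hji, hr j hj]

theorem card_pow_sub_card_le_of_forall_exists_eq_off {ι α β : Type*} [Fintype ι] [DecidableEq ι]
    [Fintype α] [Nonempty α] [Fintype β] (g : β → ι → α) (T : Finset ι)
    (h : ∀ u : ι → α, ∃ b, ∀ j ∉ T, g b j = u j) :
    Fintype.card α ^ (Fintype.card ι - #T) ≤ Fintype.card β := by
  have hsurj : Surjective fun b (j : ↥Tᶜ) => g b j := by
    intro w
    obtain ⟨b, hb⟩ := h (extend Subtype.val w fun _ => Classical.arbitrary α)
    exact ⟨b, funext fun j =>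
      (hb j (mem_compl.1 j.2)).trans (Subtype.val_injective.extend_apply _ _ j)⟩
  simpa [Fintype.card_fun, card_compl] using Fintype.card_le_of_surjective _ hsurj

theorem load_and_subpacketization_lower_bounds_general (q m t F lam : ℕ)
    (hq : 2 ≤ q) (ht : 1 ≤ t) (htm : t ≤ m) (hlam : 1 ≤ lam)
    (M : Fin F → Fin m → Fin q)
    (hF : F = lam * q ^ t) :
    F * (q - 1) ^ t ≤
      ∑ e : Fin m → Fin q,
        (Finset.univ.filter fun T : Finset (Fin m) => T.card = t).sup
          (fun T => Ncount M e T) ∧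
    ((∑ e : Fin m → Fin q,
        (Finset.univ.filter fun T : Finset (Fin m) => T.card = t).sup
          (fun T => Ncount M e T)) = F * (q - 1) ^ t →
      q ^ (m - t) ≤ F) := by
  obtain ⟨T₀, -, hT₀⟩ := exists_subset_card_eq (s := (univ : Finset (Fin m))) (by simpa using htm)
  refine ⟨mul_pow_le_sum_sup_ncount M hT₀, fun hS => ?_⟩
  have r₀ : Fin F := ⟨0, hF ▸ Nat.mul_pos hlam (by positivity)⟩
  have : Nonempty (Fin q) := Fin.pos_iff_nonempty.1 (by omega)
  have hdom e T (hT : #T = t) := ncount_le_of_sum_sup_ncount_eq M hS hT₀ e hT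
  simpa [hT₀] using card_pow_sub_card_le_of_forall_exists_eq_off M T₀
    (exists_row_eq_off M hq ht hT₀ hdom r₀)

/-- Theorem 6 (lower bounds): let `q ≥ 2`, `1 ≤ t ≤ m`, and let `M` be an
`F × m` array over `{0,...,q-1}` which is an orthogonal array `OA_λ(F,m,q,t)`
with index `λ ≥ 1` (so `F = λq^t`).  Let
`S* = Σ_{e ∈ {0,...,q-1}^m} max_T N(e,T)`, the number of distinct symbols of
the PDA generated by Construction 1 from `M` with full column index set (so
the transmission load is `R = S*/F`).  Then `S* ≥ F·(q−1)^t` (i.e.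
`R ≥ (q−1)^t`), and if `S* = F·(q−1)^t` then `F ≥ q^{m−t}`. -/
theorem load_and_subpacketization_lower_bounds (q m t F lam : ℕ)
    (hq : 2 ≤ q) (ht : 1 ≤ t) (htm : t ≤ m) (hlam : 1 ≤ lam)
    (M : Fin F → Fin m → Fin q) (hOA : IsOA F m q t lam M)
    (hF : F = lam * q ^ t) :
    F * (q - 1) ^ t ≤
      ∑ e : Fin m → Fin q,
        (Finset.univ.filter fun T : Finset (Fin m) => T.card = t).sup
          (fun T => Ncount M e T) ∧
    ((∑ e : Fin m → Fin q,
        (Finset.univ.filter fun T : Finset (Fin m) => T.card = t).sup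
          (fun T => Ncount M e T)) = F * (q - 1) ^ t →
      q ^ (m - t) ≤ F) :=
  load_and_subpacketization_lower_bounds_general q m t F lam hq ht htm hlam M hF
end

section
/- Let q ≥ 2, m ≥ 2 and 1 ≤ t < m be integers, and let M be a q^{m−1} × m array with entries in {0,...,q-1} that is an orthogonal array OA_1(q^{m−1}, m, q, m−1) of index 1 and strength m−1. Then for every e ∈ {0,...,q-1}^m and all t-element subsets T, T' of {0,...,m-1}, N(e,T) = N(e,T'). Consequently, if a vector e is induced by some non-star entry of the array of Construction 1 built from M with full column index set, then e is induced the same positive number of times in each of the C(m,t) columns (T, e|_T), i.e. e occurs in exactly C(m,t) columns and occurs the same number of times in each of these columns. -/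
open Finset

private lemma ncard_filter_eq {F : ℕ} (P : Fin F → Prop) [DecidablePred P] :
    {r : Fin F | P r}.ncard = (Finset.univ.filter P).card := by
  rw [Set.ncard_eq_toFinset_card', Set.toFinset_setOf]

/-- Counting rows that agree with a given vector on a set of coordinates. -/
private lemma countA (q m : ℕ) (M : Fin (q ^ (m - 1)) → Fin m → Fin q)
    (hOA : IsOA (q ^ (m - 1)) m q (m - 1) 1 M) :
    ∀ (k : ℕ) (S : Finset (Fin m)), S.card + k = m - 1 → ∀ v : Fin m → Fin q,
      (Finset.univ.filter (fun r => ∀ i ∈ S, M r i = v i)).card = q ^ k := by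
  intro k
  induction k with
  | zero =>
    intro S hS v
    have h := hOA S (by omega) v
    rw [ncard_filter_eq] at h
    rw [pow_zero]
    exact h
  | succ k ih =>
    intro S hS v
    obtain ⟨j, hj⟩ : ∃ j, j ∉ S := by
      by_contra h
      push_neg at h
      have h1 : S = Finset.univ := Finset.eq_univ_iff_forall.mpr h
      have h2 : S.card = m := by rw [h1, Finset.card_univ, Fintype.card_fin]
      omega
    rw [Finset.card_eq_sum_card_fiberwise (f := fun r => M r j) (t := Finset.univ)
      (fun x _ => Finset.mem_univ _)]
    have key : ∀ a : Fin q,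
        ((Finset.univ.filter (fun r => ∀ i ∈ S, M r i = v i)).filter
          (fun r => M r j = a)).card = q ^ k := by
      intro a
      rw [Finset.filter_filter]
      have hiff : ∀ r, ((∀ i ∈ S, M r i = v i) ∧ M r j = a) ↔
          (∀ i ∈ insert j S, M r i = Function.update v j a i) := by
        intro r
        constructor
        · rintro ⟨h1, h2⟩ i hi
          rcases Finset.mem_insert.mp hi with rfl | hi
          · simpa using h2
          · have hij : i ≠ j := fun h => hj (h ▸ hi)
            rw [Function.update_of_ne hij]
            exact h1 i hi
        · intro h
          refine ⟨fun i hi => ?_, ?_⟩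
          · have hij : i ≠ j := fun hh => hj (hh ▸ hi)
            have := h i (Finset.mem_insert_of_mem hi)
            rwa [Function.update_of_ne hij] at this
          · simpa using h j (Finset.mem_insert_self _ _)
      rw [Finset.filter_congr (fun r _ => hiff r)]
      exact ih (insert j S) (by rw [Finset.card_insert_of_notMem hj]; omega) _
    simp only [key, Finset.sum_const, Finset.card_univ, Fintype.card_fin, smul_eq_mul]
    rw [pow_succ]
    ring

/-- `N(e,T)` computed in terms of data independent of the particular `t`-set `T`. -/
private lemma countN (q m t : ℕ) (ht : 1 ≤ t) (htm : t < m)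
    (M : Fin (q ^ (m - 1)) → Fin m → Fin q)
    (hOA : IsOA (q ^ (m - 1)) m q (m - 1) 1 M)
    (e : Fin m → Fin q) (T : Finset (Fin m)) (hT : T.card = t) :
    (Ncount M e T : ℤ) = ∑ j ∈ Finset.range (t + 1), (t.choose j) •
      ((-1 : ℤ) ^ j * (if j = t
        then ((Finset.univ.filter (fun r => ∀ i, M r i = e i)).card : ℤ)
        else (q : ℤ) ^ (t - 1 - j))) := by
  set cE : ℤ := ((Finset.univ.filter (fun r => ∀ i, M r i = e i)).card : ℤ) with hcE
  set χ : Fin (q ^ (m - 1)) → Fin m → ℤ :=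
    fun r i => if M r i = e i then 1 else 0 with hχ
  have h1 : (Ncount M e T : ℤ) =
      ∑ r ∈ Finset.univ.filter (fun r => ∀ i ∉ T, M r i = e i),
        ∏ i ∈ T, ((1 : ℤ) - χ r i) := by
    have hprod : ∀ r : Fin (q ^ (m - 1)),
        (∏ i ∈ T, ((1 : ℤ) - χ r i))
          = if (∀ i ∈ T, M r i ≠ e i) then 1 else 0 := by
      intro r
      by_cases hall : ∀ i ∈ T, M r i ≠ e i
      · rw [if_pos hall]
        exact Finset.prod_eq_one fun i hi => by simp [hχ, hall i hi]
      · rw [if_neg hall]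
        push_neg at hall
        obtain ⟨i, hi, hie⟩ := hall
        exact Finset.prod_eq_zero hi (by simp [hχ, hie])
    simp only [hprod]
    rw [Finset.sum_boole, Finset.filter_filter, Ncount, ncard_filter_eq]
  have h2 : ∀ r, ∏ i ∈ T, ((1 : ℤ) - χ r i)
      = ∑ U ∈ T.powerset, (-1 : ℤ) ^ U.card * ∏ i ∈ U, χ r i := by
    intro r
    have hpa := Finset.prod_add (fun i => -χ r i) (fun _ => (1 : ℤ)) T
    simp only [Finset.prod_const_one, mul_one] at hpa
    calc ∏ i ∈ T, ((1 : ℤ) - χ r i) = ∏ i ∈ T, (-χ r i + 1) := by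
          refine Finset.prod_congr rfl fun i _ => by ring
      _ = ∑ U ∈ T.powerset, ∏ i ∈ U, (-χ r i) := hpa
      _ = _ := by
          refine Finset.sum_congr rfl fun U _ => ?_
          calc ∏ i ∈ U, (-χ r i) = ∏ i ∈ U, ((-1 : ℤ) * χ r i) :=
                Finset.prod_congr rfl fun i _ => (neg_one_mul _).symm
            _ = (∏ _i ∈ U, (-1 : ℤ)) * ∏ i ∈ U, χ r i := Finset.prod_mul_distrib
            _ = (-1 : ℤ) ^ U.card * ∏ i ∈ U, χ r i := by rw [Finset.prod_const]
  have h3 : (Ncount M e T : ℤ) = ∑ U ∈ T.powerset, (-1 : ℤ) ^ U.card *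
      ((Finset.univ.filter (fun r => ∀ i ∈ Tᶜ ∪ U, M r i = e i)).card : ℤ) := by
    rw [h1]
    simp only [h2]
    rw [Finset.sum_comm]
    refine Finset.sum_congr rfl fun U hU => ?_
    rw [← Finset.mul_sum]
    congr 1
    have hpb : ∀ r : Fin (q ^ (m - 1)), (∏ i ∈ U, χ r i)
        = if (∀ i ∈ U, M r i = e i) then 1 else 0 := by
      intro r
      by_cases hall : ∀ i ∈ U, M r i = e i
      · rw [if_pos hall]
        exact Finset.prod_eq_one fun i hi => by simp [hχ, hall i hi]
      · rw [if_neg hall]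
        push_neg at hall
        obtain ⟨i, hi, hie⟩ := hall
        exact Finset.prod_eq_zero hi (by simp [hχ, hie])
    simp only [hpb]
    rw [Finset.sum_boole, Finset.filter_filter]
    have hiff : ∀ r, ((∀ i ∉ T, M r i = e i) ∧ (∀ i ∈ U, M r i = e i)) ↔
        (∀ i ∈ Tᶜ ∪ U, M r i = e i) := by
      intro r
      constructor
      · rintro ⟨ha, hb⟩ i hi
        rcases Finset.mem_union.mp hi with hi | hi
        · exact ha i (Finset.mem_compl.mp hi)
        · exact hb i hi
      · intro h
        exact ⟨fun i hi => h i (Finset.mem_union_left _ (Finset.mem_compl.mpr hi)),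
          fun i hi => h i (Finset.mem_union_right _ hi)⟩
    rw [Finset.filter_congr (fun r _ => hiff r)]
  have h4 : ∀ U ∈ T.powerset,
      ((Finset.univ.filter (fun r => ∀ i ∈ Tᶜ ∪ U, M r i = e i)).card : ℤ)
        = if U.card = t then cE else (q : ℤ) ^ (t - 1 - U.card) := by
    intro U hU
    rw [Finset.mem_powerset] at hU
    by_cases hUT : U.card = t
    · have hUeq : U = T := Finset.eq_of_subset_of_card_le hU (by omega)
      have hun : Tᶜ ∪ U = Finset.univ := by
        rw [hUeq]
        refine Finset.eq_univ_iff_forall.mpr fun i => ?_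
        by_cases h : i ∈ T <;> simp [h]
      rw [if_pos hUT, hun, hcE]
      have hfe : (Finset.univ.filter
            (fun r : Fin (q ^ (m - 1)) => ∀ i ∈ (Finset.univ : Finset (Fin m)), M r i = e i))
          = Finset.univ.filter (fun r => ∀ i, M r i = e i) :=
        Finset.filter_congr (fun r _ => by simp)
      rw [hfe]
    · rw [if_neg hUT]
      have hUlt : U.card < t := lt_of_le_of_ne (hT ▸ Finset.card_le_card hU) hUT
      have hdisj : Disjoint Tᶜ U := (disjoint_compl_left (a := T)).mono_right hU
      have hcard : (Tᶜ ∪ U).card = (m - t) + U.card := by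
        rw [Finset.card_union_of_disjoint hdisj, Finset.card_compl,
          Fintype.card_fin, hT]
      have hc := countA q m M hOA (t - 1 - U.card) (Tᶜ ∪ U) (by omega) e
      rw [hc]
      push_cast
      ring
  rw [h3, Finset.sum_congr rfl (fun U hU => by rw [h4 U hU])]
  have hfin := Finset.sum_powerset_apply_card
    (fun j => (-1 : ℤ) ^ j * (if j = t then cE else (q : ℤ) ^ (t - 1 - j))) (x := T)
  rw [hfin, hT]

/-- Lemma 1: let `q ≥ 2`, `m ≥ 2`, `1 ≤ t < m`, and let `M` be a
`q^{m−1} × m` array over `{0,...,q-1}` which is an orthogonal array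
`OA_1(q^{m−1}, m, q, m−1)` of index `1` and strength `m−1`.  Then
`N(e,T) = N(e,T')` for every `e ∈ {0,...,q-1}^m` and all `t`-element subsets
`T, T'` of the coordinates.  Consequently, every vector `e` induced by some
non-star entry of the array of Construction 1 built from `M` with full column
index set is induced a positive number of times in each of the `C(m,t)`
columns `(T, e|_T)`, the same number of times in each. -/
theorem Ncount_independent_of_T (q m t : ℕ)
    (hq : 2 ≤ q) (hm : 2 ≤ m) (ht : 1 ≤ t) (htm : t < m)
    (M : Fin (q ^ (m - 1)) → Fin m → Fin q)
    (hOA : IsOA (q ^ (m - 1)) m q (m - 1) 1 M) :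
    (∀ e : Fin m → Fin q, ∀ T T' : Finset (Fin m),
      T.card = t → T'.card = t → Ncount M e T = Ncount M e T') ∧
    (∀ e : Fin m → Fin q,
      (∃ T : Finset (Fin m), T.card = t ∧ 0 < Ncount M e T) →
      ∀ T : Finset (Fin m), T.card = t → 0 < Ncount M e T) := by
  have key : ∀ e : Fin m → Fin q, ∀ T T' : Finset (Fin m),
      T.card = t → T'.card = t → Ncount M e T = Ncount M e T' := by
    intro e T T' hTc hTc'
    have h1 := countN q m t ht htm M hOA e T hTc
    have h2 := countN q m t ht htm M hOA e T' hTc'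
    exact_mod_cast h1.trans h2.symm
  refine ⟨key, ?_⟩
  rintro e ⟨T₀, hT₀, hpos⟩ T hTc
  rw [key e T T₀ hTc hT₀]
  exact hpos
end

section
/- For all integers m, t, q with 0 < t < m and q ≥ 2, there exists a (C(m,t)·q^t, q^{m−1}, q^{m−1} − (q−1)^t·q^{m−t−1}, (q−1)^t·q^{m−1}) placement delivery array, where C(m,t) denotes the binomial coefficient. -/
/-- A `(K,F,S)` placement delivery array: an `F × K` array with entries in
`{*} ∪ {0,...,S-1}` (a star is modelled by `none`), such that every integer
appears at least once, and whenever two distinct cells contain the same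
integer `s`, they lie in distinct rows and distinct columns and the two
cells at the remaining corners of the `2 × 2` subarray they determine are
both stars. -/
def IsPDA (F K S : ℕ) (P : Fin F → Fin K → Option (Fin S)) : Prop :=
  (∀ s : Fin S, ∃ j k, P j k = some s) ∧
  ∀ (j₁ j₂ : Fin F) (k₁ k₂ : Fin K) (s : Fin S),
    (j₁, k₁) ≠ (j₂, k₂) → P j₁ k₁ = some s → P j₂ k₂ = some s →
      j₁ ≠ j₂ ∧ k₁ ≠ k₂ ∧ P j₁ k₂ = none ∧ P j₂ k₁ = none

/-- A `(K,F,Z,S)` placement delivery array: a `(K,F,S)` PDA each of whose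
columns contains exactly `Z` stars. -/
def IsPDAWith (F K Z S : ℕ) (P : Fin F → Fin K → Option (Fin S)) : Prop :=
  IsPDA F K S P ∧ ∀ k : Fin K, {j : Fin F | P j k = none}.ncard = Z

/-!
Let `G` be an abelian group of order `q` and `ι` a linearly ordered set of `m` coordinates. The rows
are the `q^(m-1)` vectors `x ∈ G^ι` with coordinate sum `0` (an orthogonal array of strength
`m - 1`); the columns are the pairs `(T, b)` with `T` a `t`-subset of `ι` and `b ∈ G^t`, read along
the increasing enumeration of `T`. The cell `(x, (T, b))` is a star iff `x` agrees with `b`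
somewhere on `T`; otherwise it holds `(d, z)`, where `d = x|_T - b` has no zero entry and `z` is `x`
with its `T`-coordinates overwritten by `b`, so that `∑ z = -∑ d`.

Two cells carrying the same symbol share `z`. If their subsets coincide, `d` and `z` recover `x`
and `b`. Otherwise some `j ∈ T \ T'` gives `x'_j = z_j = b_j`, a star at `(x', (T, b))`, and
symmetrically. For the star count, `(q-1)^t q^(m-t)` vectors avoid `b` on `T`, and shifting a
coordinate outside `T` shows that every value of the coordinate sum is taken equally often.
-/

open Finset Function

section TypedPDA

variable {R C Sy : Type*}

def IsTypedPDAWith (Z : ℕ) (A : R → C → Option Sy) : Prop :=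
  (∀ s, ∃ r c, A r c = some s) ∧
  (∀ (r₁ r₂ : R) (c₁ c₂ : C) (s : Sy), (r₁, c₁) ≠ (r₂, c₂) → A r₁ c₁ = some s →
    A r₂ c₂ = some s → r₁ ≠ r₂ ∧ c₁ ≠ c₂ ∧ A r₁ c₂ = none ∧ A r₂ c₁ = none) ∧
  ∀ c, Nat.card {r // A r c = none} = Z

theorem IsTypedPDAWith.isPDAWith {Z F K S : ℕ} {A : R → C → Option Sy}
    (hA : IsTypedPDAWith Z A) (eF : Fin F ≃ R) (eK : Fin K ≃ C) (eS : Sy ≃ Fin S) :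
    IsPDAWith F K Z S fun j k => (A (eF j) (eK k)).map eS := by
  obtain ⟨hsurj, hclash, hstar⟩ := hA
  refine ⟨⟨fun s => ?_, fun j₁ j₂ k₁ k₂ s hne h₁ h₂ => ?_⟩, fun k => ?_⟩
  · obtain ⟨r, c, h⟩ := hsurj (eS.symm s)
    exact ⟨eF.symm r, eK.symm c, by simp [h]⟩
  · obtain ⟨a, ha, rfl⟩ := Option.map_eq_some_iff.1 h₁
    obtain ⟨b, hb, hab⟩ := Option.map_eq_some_iff.1 h₂
    obtain rfl := eS.injective hab
    have hne' : (eF j₁, eK k₁) ≠ (eF j₂, eK k₂) := by simpa using hne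
    obtain ⟨hr, hc, h₁₂, h₂₁⟩ := hclash _ _ _ _ _ hne' ha hb
    exact ⟨fun h => hr (congrArg eF h), fun h => hc (congrArg eK h), by simp [h₁₂], by simp [h₂₁]⟩
  · rw [← Nat.card_coe_set_eq, ← hstar (eK k)]
    exact Nat.card_congr (eF.subtypeEquiv fun j => by simp)

theorem IsTypedPDAWith.exists_isPDAWith [Fintype R] [Fintype C] [Fintype Sy] {Z F K S : ℕ}
    {A : R → C → Option Sy} (hA : IsTypedPDAWith Z A) (hF : Fintype.card R = F)
    (hK : Fintype.card C = K) (hS : Fintype.card Sy = S) : ∃ P, IsPDAWith F K Z S P :=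
  ⟨_, hA.isPDAWith (Fintype.equivFinOfCardEq hF).symm (Fintype.equivFinOfCardEq hK).symm
    (Fintype.equivFinOfCardEq hS)⟩

end TypedPDA

theorem Function.Injective.sum_extend_zero {α ι M : Type*} [Fintype α] [Fintype ι]
    [AddCommMonoid M] {σ : α → ι} (hσ : Injective σ) (d : α → M) :
    ∑ i, extend σ d 0 i = ∑ k, d k :=
  (Fintype.sum_of_injective σ hσ d _ (fun i hi => extend_apply' (f := σ) d 0 i hi)
    fun k => (hσ.extend_apply _ _ k).symm).symm

section SumFibers

variable {ι G : Type*} [Fintype ι] [DecidableEq ι] [Fintype G] [DecidableEq G]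

theorem card_forall_apply_ne {α : Type*} [Fintype α] {σ : α → ι} (hσ : Injective σ)
    (b : α → G) :
    Fintype.card {x : ι → G // ∀ k, x (σ k) ≠ b k} =
      (Fintype.card G - 1) ^ Fintype.card α *
        Fintype.card G ^ (Fintype.card ι - Fintype.card α) := by
  set A : ι → Finset G := fun j => {g | ∀ k, σ k = j → g ≠ b k}
  have hA (k : α) : A (σ k) = {b k}ᶜ := by
    ext g; simp [A, hσ.eq_iff]
  have hA' : ∀ j ∉ univ.map ⟨σ, hσ⟩, A j = univ := by
    intro j hj; ext g; simp_all [A]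
  have hfilter : ({x | ∀ k, x (σ k) ≠ b k} : Finset (ι → G)) = Fintype.piFinset A := by
    ext x
    simp only [mem_filter, mem_univ, true_and, Fintype.mem_piFinset, A]
    exact ⟨fun h j k hk g => h k (hk ▸ g), fun h k => h _ k rfl⟩
  rw [Fintype.card_subtype, hfilter, Fintype.card_piFinset,
    ← prod_mul_prod_compl (univ.map ⟨σ, hσ⟩), prod_map,
    prod_congr rfl fun j hj => congrArg card (hA' j (mem_compl.1 hj))]
  simp [hA, card_compl]

variable [AddCommGroup G]

theorem card_filter_sum_eq_mul_card {S : Finset (ι → G)} (j₀ : ι)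
    (hS : ∀ x ∈ S, ∀ g, x + Pi.single j₀ g ∈ S) (c : G) :
    #{x ∈ S | ∑ i, x i = c} * Fintype.card G = #S := by
  have hsum (x : ι → G) (g : G) : ∑ i, (x + Pi.single j₀ g : ι → G) i = ∑ i, x i + g := by
    simp [sum_add_distrib]
  have hmaps (a b : G) : Set.MapsTo (· + Pi.single j₀ (b - a))
      (S.filter fun x => ∑ i, x i = a : Set (ι → G)) (S.filter fun x => ∑ i, x i = b) := by
    intro x hx
    simp only [coe_filter, Set.mem_ofPred_eq] at hx ⊢
    exact ⟨hS _ hx.1 _, by rw [hsum, hx.2, add_sub_cancel]⟩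
  have hcancel (a b : G) (x : ι → G) : x + Pi.single j₀ (b - a) + Pi.single j₀ (a - b) = x := by
    rw [add_assoc, ← Pi.single_add, sub_add_sub_cancel, sub_self, Pi.single_zero, add_zero]
  have hfiber (c' : G) : #{x ∈ S | ∑ i, x i = c'} = #{x ∈ S | ∑ i, x i = c} :=
    card_nbij' (· + Pi.single j₀ (c - c')) (· + Pi.single j₀ (c' - c)) (hmaps c' c) (hmaps c c')
      (fun x _ => hcancel c' c x) fun x _ => hcancel c c' x
  rw [card_eq_sum_card_fiberwise (s := S) (f := fun x => ∑ i, x i) (t := univ)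
      fun _ _ => mem_univ _,
    sum_congr rfl fun c' _ => hfiber c', sum_const, card_univ, smul_eq_mul, mul_comm]

theorem card_subtype_sum_eq [Nonempty ι] (c : G) :
    Fintype.card {x : ι → G // ∑ i, x i = c} = Fintype.card G ^ (Fintype.card ι - 1) := by
  obtain ⟨j₀⟩ := ‹Nonempty ι›
  have h := card_filter_sum_eq_mul_card (S := univ) j₀ (fun _ _ _ => mem_univ _) c
  rw [card_univ, Fintype.card_fun, ← pow_sub_one_mul Fintype.card_ne_zero] at h
  rw [Fintype.card_subtype]
  exact Nat.eq_of_mul_eq_mul_right Fintype.card_pos h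

theorem card_forall_apply_ne_and_sum_eq {α : Type*} [Fintype α] {σ : α → ι} (hσ : Injective σ)
    (b : α → G) {j₀ : ι} (hj₀ : j₀ ∉ Set.range σ) (c : G) :
    Fintype.card {x : ι → G // (∀ k, x (σ k) ≠ b k) ∧ ∑ i, x i = c} =
      (Fintype.card G - 1) ^ Fintype.card α *
        Fintype.card G ^ (Fintype.card ι - Fintype.card α - 1) := by
  have hlt : Fintype.card α < Fintype.card ι :=
    Fintype.card_lt_of_injective_not_surjective σ hσ fun h => hj₀ (h j₀)
  have hS : ∀ x ∈ ({x | ∀ k, x (σ k) ≠ b k} : Finset (ι → G)), ∀ g,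
      x + Pi.single j₀ g ∈ ({x | ∀ k, x (σ k) ≠ b k} : Finset (ι → G)) := by
    intro x hx g
    simp only [mem_filter, mem_univ, true_and] at hx ⊢
    intro k
    rw [Pi.add_apply, Pi.single_eq_of_ne (fun h => hj₀ ⟨k, h⟩), add_zero]
    exact hx k
  have h := card_filter_sum_eq_mul_card j₀ hS c
  rw [← Fintype.card_subtype, card_forall_apply_ne hσ b, filter_filter,
    ← pow_sub_one_mul (by omega : Fintype.card ι - Fintype.card α ≠ 0), ← mul_assoc] at h
  rw [Fintype.card_subtype]
  exact Nat.eq_of_mul_eq_mul_right Fintype.card_pos h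

end SumFibers

namespace SumZeroPDA

abbrev Col (ι G : Type*) (t : ℕ) := {T : Finset ι // #T = t} × (Fin t → G)

abbrev Row (ι G : Type*) [Fintype ι] [AddCommGroup G] := {x : ι → G // ∑ i, x i = 0}

abbrev Symbol (ι G : Type*) [Fintype ι] [AddCommGroup G] (t : ℕ) :=
  {s : (Fin t → {g : G // g ≠ 0}) × (ι → G) // ∑ i, s.2 i + ∑ k, (s.1 k : G) = 0}

theorem card_col {ι G : Type*} [Fintype ι] [Fintype G] {t : ℕ} :
    Fintype.card (Col ι G t) = (Fintype.card ι).choose t * Fintype.card G ^ t := by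
  simp

variable {ι G : Type*} [LinearOrder ι] {t : ℕ}

def Col.emb (c : Col ι G t) : Fin t ↪o ι := c.1.1.orderEmbOfFin c.1.2

theorem Col.mem_range_emb {c : Col ι G t} {j : ι} : j ∈ Set.range c.emb ↔ j ∈ c.1.1 := by
  simp [Col.emb]

variable [Fintype ι] [AddCommGroup G] [DecidableEq G]

noncomputable def entry (x : Row ι G) (c : Col ι G t) : Option (Symbol ι G t) :=
  if h : ∀ k, x.1 (c.emb k) ≠ c.2 k then
    some ⟨(fun k => ⟨x.1 (c.emb k) - c.2 k, sub_ne_zero.2 (h k)⟩,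
      x.1 - extend c.emb (fun k => x.1 (c.emb k) - c.2 k) 0),
      by simp [sum_sub_distrib, c.emb.injective.sum_extend_zero, x.2]⟩
  else none

theorem entry_eq_none_iff {x : Row ι G} {c : Col ι G t} :
    entry x c = none ↔ ¬ ∀ k, x.1 (c.emb k) ≠ c.2 k := by
  unfold entry
  split_ifs with h <;> simp_all

theorem entry_eq_some_iff {x : Row ι G} {c : Col ι G t} {s : Symbol ι G t} :
    entry x c = some s ↔ (∀ k, x.1 (c.emb k) - c.2 k = s.1.1 k) ∧
      x.1 = s.1.2 + extend c.emb (fun k => (s.1.1 k : G)) 0 := by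
  unfold entry
  split_ifs with h
  · rw [Option.some_inj]
    constructor
    · rintro rfl
      exact ⟨fun k => rfl, by simp⟩
    · rintro ⟨hd, hx⟩
      have hd' : (fun k => x.1 (c.emb k) - c.2 k) = fun k => (s.1.1 k : G) := funext hd
      refine Subtype.ext (Prod.ext (funext fun k => Subtype.ext (hd k)) ?_)
      show x.1 - extend c.emb (fun k => x.1 (c.emb k) - c.2 k) 0 = s.1.2
      rw [hd', hx, add_sub_cancel_right]
  · simp only [false_iff, not_and]
    intro hd _
    exact h fun k hk => (s.1.1 k).2 (by rw [← hd k, hk, sub_self])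

theorem eq_of_entry_eq_some {x x' : Row ι G} {c c' : Col ι G t} {s : Symbol ι G t}
    (h : entry x c = some s) (h' : entry x' c' = some s) (hT : c.1 = c'.1) : x = x' ∧ c = c' := by
  obtain ⟨T, b⟩ := c
  obtain ⟨T', b'⟩ := c'
  obtain rfl : T = T' := hT
  rw [entry_eq_some_iff] at h h'
  obtain rfl : x = x' := Subtype.ext (h.2.trans h'.2.symm)
  exact ⟨rfl, Prod.ext rfl (funext fun k => sub_right_injective ((h.1 k).trans (h'.1 k).symm))⟩

theorem entry_eq_none_of_not_subset {x x' : Row ι G} {c c' : Col ι G t} {s : Symbol ι G t}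
    (h : entry x c = some s) (h' : entry x' c' = some s) (hT : ¬ c.1.1 ⊆ c'.1.1) :
    entry x' c = none := by
  obtain ⟨j, hj, hj'⟩ := not_subset.1 hT
  obtain ⟨k, rfl⟩ := Col.mem_range_emb.2 hj
  rw [entry_eq_some_iff] at h h'
  refine entry_eq_none_iff.2 fun hne => hne k ?_
  calc x'.1 (c.emb k) = s.1.2 (c.emb k) := by
        rw [h'.2, Pi.add_apply, extend_apply' _ _ _ (mt Col.mem_range_emb.1 hj'), Pi.zero_apply,
          add_zero]
    _ = x.1 (c.emb k) - s.1.1 k := by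
        rw [h.2, Pi.add_apply, c.emb.injective.extend_apply, add_sub_cancel_right]
    _ = c.2 k := by rw [← h.1 k, sub_sub_cancel]

theorem entry_clash {x x' : Row ι G} {c c' : Col ι G t} {s : Symbol ι G t}
    (h : entry x c = some s) (h' : entry x' c' = some s) (hne : (x, c) ≠ (x', c')) :
    x ≠ x' ∧ c ≠ c' ∧ entry x c' = none ∧ entry x' c = none := by
  have hT : c.1 ≠ c'.1 := fun hT => hne <| by
    obtain ⟨rfl, rfl⟩ := eq_of_entry_eq_some h h' hT
    rfl
  have hcard : #c.1.1 = #c'.1.1 := c.1.2.trans c'.1.2.symm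
  have h₁ : entry x c' = none := entry_eq_none_of_not_subset h' h fun hs =>
    hT (Subtype.ext (eq_of_subset_of_card_le hs hcard.le).symm)
  have h₂ : entry x' c = none := entry_eq_none_of_not_subset h h' fun hs =>
    hT (Subtype.ext (eq_of_subset_of_card_le hs hcard.ge))
  refine ⟨?_, fun hc => hT (congrArg Prod.fst hc), h₁, h₂⟩
  rintro rfl
  simp [h₁] at h'

theorem exists_entry_eq_some (ht : t ≤ Fintype.card ι) (s : Symbol ι G t) :
    ∃ x c, entry x c = some s := by
  obtain ⟨T, -, hT⟩ := exists_subset_card_eq (s := (univ : Finset ι)) (by simpa using ht)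
  let σ := T.orderEmbOfFin hT
  refine ⟨⟨s.1.2 + extend σ (fun k => (s.1.1 k : G)) 0, ?_⟩, (⟨T, hT⟩, fun k => s.1.2 (σ k)), ?_⟩
  · simpa [sum_add_distrib, σ.injective.sum_extend_zero] using s.2
  · refine entry_eq_some_iff.2 ⟨fun k => ?_, rfl⟩
    simp [Col.emb, σ, (T.orderEmbOfFin hT).injective.extend_apply]

variable [Fintype G]

theorem card_row [Nonempty ι] :
    Fintype.card (Row ι G) = Fintype.card G ^ (Fintype.card ι - 1) :=
  card_subtype_sum_eq 0

theorem card_symbol [Nonempty ι] : Fintype.card (Symbol ι G t) =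
    (Fintype.card G - 1) ^ t * Fintype.card G ^ (Fintype.card ι - 1) := by
  rw [Fintype.card_congr (Equiv.subtypeProdEquivSigmaSubtype
      fun (d : Fin t → {g : G // g ≠ 0}) (z : ι → G) => ∑ i, z i + ∑ k, (d k : G) = 0),
    Fintype.card_sigma]
  simp_rw [← eq_neg_iff_add_eq_zero, card_subtype_sum_eq]
  simp [Fintype.card_subtype_compl]

theorem card_entry_eq_none (ht : t < Fintype.card ι) (c : Col ι G t) :
    Nat.card {x : Row ι G // entry x c = none} = Fintype.card G ^ (Fintype.card ι - 1) -
      (Fintype.card G - 1) ^ t * Fintype.card G ^ (Fintype.card ι - t - 1) := by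
  have : Nonempty ι := Fintype.card_pos_iff.1 (by omega)
  obtain ⟨j₀, -, hj₀⟩ := exists_mem_notMem_of_card_lt_card (s := c.1.1) (t := univ)
    (by rwa [c.1.2, card_univ])
  have hfree : Fintype.card {x : Row ι G // ∀ k, x.1 (c.emb k) ≠ c.2 k} =
      (Fintype.card G - 1) ^ t * Fintype.card G ^ (Fintype.card ι - t - 1) := by
    refine (Fintype.card_congr ((Equiv.subtypeSubtypeEquivSubtypeInter
      (fun x : ι → G => ∑ i, x i = 0) fun x => ∀ k, x (c.emb k) ≠ c.2 k).trans
      (Equiv.subtypeEquivRight fun _ => and_comm))).trans ?_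
    convert card_forall_apply_ne_and_sum_eq c.emb.injective c.2 (mt Col.mem_range_emb.1 hj₀) 0
      using 2 <;> rw [Fintype.card_fin]
  rw [Nat.card_eq_fintype_card,
    Fintype.card_congr (Equiv.subtypeEquivRight fun _ => entry_eq_none_iff),
    Fintype.card_subtype_compl, card_row, hfree]

theorem isTypedPDAWith_entry (ht : t < Fintype.card ι) :
    IsTypedPDAWith (Fintype.card G ^ (Fintype.card ι - 1) -
      (Fintype.card G - 1) ^ t * Fintype.card G ^ (Fintype.card ι - t - 1))
      (entry (ι := ι) (G := G) (t := t)) :=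
  ⟨exists_entry_eq_some ht.le, fun _ _ _ _ _ hne h h' => entry_clash h h' hne,
    card_entry_eq_none ht⟩

end SumZeroPDA

theorem exists_PDA_OA_strength_m_sub_one_general (m t q : ℕ)
    (htm : t < m) (hq : 2 ≤ q) :
    ∃ P : Fin (q ^ (m - 1)) → Fin (m.choose t * q ^ t) →
        Option (Fin ((q - 1) ^ t * q ^ (m - 1))),
      IsPDAWith (q ^ (m - 1)) (m.choose t * q ^ t)
        (q ^ (m - 1) - (q - 1) ^ t * q ^ (m - t - 1))
        ((q - 1) ^ t * q ^ (m - 1)) P := by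
  have : NeZero q := ⟨by omega⟩
  have : Nonempty (Fin m) := ⟨⟨0, by omega⟩⟩
  have hPDA := SumZeroPDA.isTypedPDAWith_entry (G := ZMod q) (ι := Fin m) (t := t) (by simpa)
  simp only [ZMod.card, Fintype.card_fin] at hPDA
  refine hPDA.exists_isPDAWith ?_ ?_ ?_
  · rw [SumZeroPDA.card_row, ZMod.card, Fintype.card_fin]
  · rw [SumZeroPDA.card_col, ZMod.card, Fintype.card_fin]
  · rw [SumZeroPDA.card_symbol, ZMod.card, Fintype.card_fin]

/-- Theorem 5: for all integers `m, t, q` with `0 < t < m` and `q ≥ 2`, there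
exists a `(C(m,t)·q^t, q^{m−1}, q^{m−1} − (q−1)^t·q^{m−t−1}, (q−1)^t·q^{m−1})`
placement delivery array. -/
theorem exists_PDA_OA_strength_m_sub_one (m t q : ℕ)
    (ht : 0 < t) (htm : t < m) (hq : 2 ≤ q) :
    ∃ P : Fin (q ^ (m - 1)) → Fin (m.choose t * q ^ t) →
        Option (Fin ((q - 1) ^ t * q ^ (m - 1))),
      IsPDAWith (q ^ (m - 1)) (m.choose t * q ^ t)
        (q ^ (m - 1) - (q - 1) ^ t * q ^ (m - t - 1))
        ((q - 1) ^ t * q ^ (m - 1)) P :=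
  exists_PDA_OA_strength_m_sub_one_general m t q htm hq
end

section
/- Let m and t be integers with m ≥ 2t ≥ 2, let q be a prime power and let F_q be the finite field with q elements. If there exists an [m, m−t]_q MDS code, then there exists a (C(m,t)·q^t, q^{m−t}, q^{m−t} − (q−1)^t·q^{m−2t}, q^m − q^{m−t}) placement delivery array, where C(m,t) denotes the binomial coefficient. -/
/-! The rows of the array are the codewords `c` of the MDS code and the columns are the pairs
`(τ, b)` of a `t`-set `τ` of coordinates and a word `b` on `τ`.  The cell `(c, (τ, b))` is a
star unless `c` differs from `b` at every coordinate of `τ`, in which case it holds the word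
obtained from `c` by overwriting `τ` with `b`.  Since the minimum distance is `t + 1`, a filled
cell is recovered from its entry `v` and its row `c` (then `τ` is where `v` and `c` differ), and
from `v` and `τ`; so two distinct cells with the same entry have supports of which neither
contains the other, which forces the two cross cells to be stars.  The entries are non-codewords,
and since any `m - t` coordinates form an information set each column has
`(q - 1)^t q^(m - 2t)` filled cells, at least `q^m` in total.  Refining the labelling (which keeps
the PDA property) then produces exactly `q^m - q^(m-t)` symbols. -/

open Finset

theorem Nat.card_subtype_not {α : Type*} [Finite α] (p : α → Prop) :
    Nat.card {a // ¬ p a} = Nat.card α - Nat.card {a // p a} :=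
  Set.ncard_compl {a | p a}

theorem Nat.card_pi_ne {ι α : Type*} [Fintype ι] [Finite α] (b : ι → α) :
    Nat.card {y : ι → α // ∀ i, y i ≠ b i} = (Nat.card α - 1) ^ Fintype.card ι := by
  rw [Nat.card_congr (Equiv.subtypePiEquivPi (p := fun i a => a ≠ b i)), Nat.card_pi]
  simp [Nat.card_subtype_not]

theorem Nat.two_pow_le_centralBinom (n : ℕ) : 2 ^ n ≤ n.centralBinom := by
  induction n with
  | zero => simp
  | succ n ih =>
    have h := Nat.succ_mul_centralBinom_succ n
    have : (n + 1) * (2 * n.centralBinom) ≤ (n + 1) * (n + 1).centralBinom := by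
      rw [h]; nlinarith
    rw [pow_succ]
    nlinarith [Nat.le_of_mul_le_mul_left this n.succ_pos]

theorem pow_le_choose_mul_pred_pow {q m t : ℕ} (hq : 2 ≤ q) (hmt : 2 * t ≤ m) :
    q ^ t ≤ m.choose t * (q - 1) ^ t :=
  calc q ^ t ≤ (2 * (q - 1)) ^ t := Nat.pow_le_pow_left (by omega) t
    _ = 2 ^ t * (q - 1) ^ t := mul_pow ..
    _ ≤ m.choose t * (q - 1) ^ t := by
      gcongr
      exact (Nat.two_pow_le_centralBinom t).trans
        ((Nat.centralBinom_eq_two_mul_choose t).trans_le (Nat.choose_le_choose t hmt))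

theorem pow_sub_pow_le_choose_mul {q m t : ℕ} (hq : 2 ≤ q) (hmt : 2 * t ≤ m) :
    q ^ m - q ^ (m - t) ≤ m.choose t * q ^ t * ((q - 1) ^ t * q ^ (m - 2 * t)) :=
  calc q ^ m - q ^ (m - t) ≤ q ^ t * q ^ t * q ^ (m - 2 * t) := by
        rw [← pow_add, ← pow_add]
        exact (Nat.sub_le _ _).trans_eq (by congr 1; omega)
    _ ≤ q ^ t * (m.choose t * (q - 1) ^ t) * q ^ (m - 2 * t) := by
        gcongr
        exact pow_le_choose_mul_pred_pow hq hmt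
    _ = _ := by ring

theorem exists_surjective_fin_of_card_range_le {N V : Type*} [Finite N] (g : N → V) {S : ℕ}
    (hg : Nat.card (Set.range g) ≤ S) (hS : S ≤ Nat.card N) :
    ∃ h : N → Fin S, Function.Surjective h ∧ ∀ x y, h x = h y → g x = g y := by
  classical
  -- give fresh symbols to `S - |range g|` points outside a set of representatives of the fibres
  set free := (Set.range (Set.rangeSplitting g))ᶜ
  have hfree : free.ncard = Nat.card N - Nat.card (Set.range g) := by
    rw [Set.ncard_compl, Set.ncard_range_of_injective (Set.rangeSplitting_injective g)]
  obtain ⟨A, hA, hAcard⟩ := Set.exists_subset_card_eq (s := free)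
    (n := S - Nat.card (Set.range g)) (by omega)
  let e : A ⊕ Set.range g ≃ Fin S :=
    Finite.equivFinOfCardEq (by rw [Nat.card_sum, Nat.card_coe_set_eq, hAcard]; omega)
  let k : N → A ⊕ Set.range g := fun x =>
    if hx : x ∈ A then .inl ⟨x, hx⟩ else .inr (Set.rangeFactorization g x)
  refine ⟨e ∘ k, e.surjective.comp ?_, fun x y hxy => ?_⟩
  · rintro (⟨a, ha⟩ | l)
    · exact ⟨a, dif_pos ha⟩
    · have hl : Set.rangeSplitting g l ∉ A := fun h => hA h ⟨l, rfl⟩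
      refine ⟨Set.rangeSplitting g l, ?_⟩
      simp [k, hl, Set.rangeFactorization, Set.apply_rangeSplitting]
  · have hk := e.injective hxy
    by_cases hx : x ∈ A <;> by_cases hy : y ∈ A <;> simp [k, hx, hy, Set.rangeFactorization] at hk
    · rw [hk]
    · exact hk

theorem exists_isPDAWith_of_filled {R C V : Type*} [Finite R] [Finite C] {F K Y S : ℕ}
    (filled : R → C → Prop) (label : R → C → V) (hR : Nat.card R = F) (hC : Nat.card C = K)
    (hY : ∀ c, Nat.card {r // filled r c} = Y)
    (hpair : ∀ r₁ r₂ c₁ c₂, filled r₁ c₁ → filled r₂ c₂ → label r₁ c₁ = label r₂ c₂ →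
      (r₁, c₁) ≠ (r₂, c₂) → r₁ ≠ r₂ ∧ c₁ ≠ c₂ ∧ ¬ filled r₁ c₂ ∧ ¬ filled r₂ c₁)
    (hlabels : Nat.card (Set.range fun p : {p : R × C // filled p.1 p.2} => label p.1.1 p.1.2) ≤ S)
    (hS : S ≤ K * Y) :
    ∃ P, IsPDAWith F K (F - Y) S P := by
  classical
  have := Fintype.ofFinite C
  have hcells : Nat.card {p : R × C // filled p.1 p.2} = K * Y := by
    rw [Nat.card_congr ((Equiv.prodComm R C).subtypeEquiv (p := fun p => filled p.1 p.2)
        (q := fun p => filled p.2 p.1) fun _ => Iff.rfl),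
      Nat.card_congr (Equiv.subtypeProdEquivSigmaSubtype fun c r => filled r c), Nat.card_sigma]
    simp [hY, ← hC, Nat.card_eq_fintype_card]
  obtain ⟨h, hsurj, hrefine⟩ := exists_surjective_fin_of_card_range_le _ hlabels (hcells ▸ hS)
  let eR : Fin F ≃ R := (Finite.equivFinOfCardEq hR).symm
  let eC : Fin K ≃ C := (Finite.equivFinOfCardEq hC).symm
  let P : Fin F → Fin K → Option (Fin S) := fun j k =>
    if hf : filled (eR j) (eC k) then some (h ⟨(eR j, eC k), hf⟩) else none
  have hnone : ∀ j k, P j k = none ↔ ¬ filled (eR j) (eC k) := by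
    intro j k
    by_cases hf : filled (eR j) (eC k) <;> simp [P, hf]
  have hsome : ∀ j k s, P j k = some s → ∃ hf, h ⟨(eR j, eC k), hf⟩ = s := by
    intro j k s hs
    by_cases hf : filled (eR j) (eC k) <;> simp_all [P]
  refine ⟨P, ⟨fun s => ?_, ?_⟩, fun k => ?_⟩
  · obtain ⟨⟨⟨r, c⟩, hf⟩, rfl⟩ := hsurj s
    exact ⟨eR.symm r, eC.symm c, by simp [P, hf]⟩
  · intro j₁ j₂ k₁ k₂ s hne h₁ h₂
    obtain ⟨hf₁, rfl⟩ := hsome _ _ _ h₁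
    obtain ⟨hf₂, hs⟩ := hsome _ _ _ h₂
    obtain ⟨hr, hc, h₁₂, h₂₁⟩ := hpair _ _ _ _ hf₁ hf₂ (hrefine _ _ hs).symm
      (by simpa [Prod.ext_iff] using hne)
    exact ⟨fun h => hr (by rw [h]), fun h => hc (by rw [h]), (hnone _ _).2 h₁₂, (hnone _ _).2 h₂₁⟩
  · calc {j | P j k = none}.ncard = Nat.card {j // ¬ filled (eR j) (eC k)} := by
          simp only [hnone]; rfl
      _ = Nat.card {r // ¬ filled r (eC k)} := Nat.card_congr (eR.subtypeEquiv fun _ => Iff.rfl)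
      _ = F - Y := by rw [Nat.card_subtype_not, hR, hY]

abbrev Patch (m t : ℕ) (K : Type*) := Σ τ : {s : Finset (Fin m) // s.card = t}, τ.1 → K

namespace Patch

variable {m t : ℕ} {K : Type*}

def Avoids (p : Patch m t K) (c : Fin m → K) : Prop := ∀ i : p.1.1, c i ≠ p.2 i

def overwrite (p : Patch m t K) (c : Fin m → K) : Fin m → K :=
  fun i => if h : i ∈ p.1.1 then p.2 ⟨i, h⟩ else c i

theorem overwrite_of_mem (p : Patch m t K) (c : Fin m → K) {i : Fin m} (h : i ∈ p.1.1) :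
    p.overwrite c i = p.2 ⟨i, h⟩ :=
  dif_pos h

theorem overwrite_of_notMem (p : Patch m t K) (c : Fin m → K) {i : Fin m} (h : i ∉ p.1.1) :
    p.overwrite c i = c i :=
  dif_neg h

theorem overwrite_ne_iff {p : Patch m t K} {c : Fin m → K} (hp : p.Avoids c) (i : Fin m) :
    p.overwrite c i ≠ c i ↔ i ∈ p.1.1 := by
  by_cases h : i ∈ p.1.1
  · simpa [p.overwrite_of_mem c h, h] using (hp ⟨i, h⟩).symm
  · simp [p.overwrite_of_notMem c h, h]

theorem support_subset_of_overwrite_eq {c₁ c₂ : Fin m → K} {p₁ p₂ : Patch m t K}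
    (h : p₁.overwrite c₁ = p₂.overwrite c₂) (h₂₁ : p₂.Avoids c₁) : p₂.1.1 ⊆ p₁.1.1 := by
  intro i hi
  by_contra hi₁
  have := congrFun h i
  rw [overwrite_of_notMem _ _ hi₁, overwrite_of_mem _ _ hi] at this
  exact h₂₁ ⟨i, hi⟩ this

theorem natCard [Finite K] : Nat.card (Patch m t K) = m.choose t * Nat.card K ^ t := by
  simp only [Nat.card_sigma, Nat.card_fun, Nat.card_eq_finsetCard]
  rw [sum_congr rfl fun τ _ => by rw [τ.2], sum_const, card_univ, Fintype.card_finset_len,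
    Fintype.card_fin, smul_eq_mul]

end Patch

section Ring

variable {K : Type*} [Ring K] [DecidableEq K] {m t : ℕ} {C : Submodule K (Fin m → K)}

theorem Submodule.eq_of_forall_notMem_eq (hC : ∀ c ∈ C, c ≠ 0 → t < hammingNorm c)
    {x y : Fin m → K} (hx : x ∈ C) (hy : y ∈ C) {s : Finset (Fin m)} (hs : s.card ≤ t)
    (hxy : ∀ i ∉ s, x i = y i) : x = y := by
  by_contra hne
  have hwt := hC _ (C.sub_mem hx hy) (sub_ne_zero.2 hne)
  have : hammingNorm (x - y) ≤ s.card := card_le_card fun i hi => by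
    by_contra his
    simp [hxy i his] at hi
  omega

theorem Submodule.eq_of_overwrite_eq (hC : ∀ c ∈ C, c ≠ 0 → t < hammingNorm c)
    {c₁ c₂ : Fin m → K} (hc₁ : c₁ ∈ C) (hc₂ : c₂ ∈ C) {p₁ p₂ : Patch m t K}
    (h : p₁.overwrite c₁ = p₂.overwrite c₂) (hτ : p₁.1 = p₂.1) : c₁ = c₂ ∧ p₁ = p₂ := by
  obtain ⟨τ, b₁⟩ := p₁
  obtain ⟨τ', b₂⟩ := p₂
  obtain rfl : τ = τ' := hτ
  refine ⟨C.eq_of_forall_notMem_eq hC hc₁ hc₂ τ.2.le fun i hi => ?_, ?_⟩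
  · have := congrFun h i
    rwa [Patch.overwrite_of_notMem ⟨τ, b₁⟩ c₁ hi, Patch.overwrite_of_notMem ⟨τ, b₂⟩ c₂ hi] at this
  · congr
    funext i
    have := congrFun h i
    rwa [Patch.overwrite_of_mem ⟨τ, b₁⟩ c₁ i.2, Patch.overwrite_of_mem ⟨τ, b₂⟩ c₂ i.2] at this

theorem Submodule.overwrite_pair (hC : ∀ c ∈ C, c ≠ 0 → t < hammingNorm c) {c₁ c₂ : C}
    {p₁ p₂ : Patch m t K} (h₂ : p₂.Avoids c₂)
    (h : p₁.overwrite c₁ = p₂.overwrite c₂) (hne : (c₁, p₁) ≠ (c₂, p₂)) :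
    c₁ ≠ c₂ ∧ p₁ ≠ p₂ ∧ ¬ p₂.Avoids c₁ ∧ ¬ p₁.Avoids c₂ := by
  have hτ : p₁.1 ≠ p₂.1 := fun hτ => by
    obtain ⟨hc, hp⟩ := C.eq_of_overwrite_eq hC c₁.2 c₂.2 h hτ
    exact hne (Prod.ext (Subtype.ext hc) hp)
  have support_eq {p p' : Patch m t K} (hsub : p.1.1 ⊆ p'.1.1) : p.1 = p'.1 :=
    Subtype.ext (eq_of_subset_of_card_le hsub (by rw [p.1.2, p'.1.2]))
  have h₁₂ : ¬ p₂.Avoids c₁ := fun h₁₂ =>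
    hτ (support_eq (Patch.support_subset_of_overwrite_eq h h₁₂)).symm
  refine ⟨fun hc => h₁₂ (hc ▸ h₂), fun hp => hτ (by rw [hp]), h₁₂, fun h₂₁ =>
    hτ (support_eq (Patch.support_subset_of_overwrite_eq h.symm h₂₁))⟩

theorem Submodule.overwrite_notMem (hC : ∀ c ∈ C, c ≠ 0 → t < hammingNorm c) (ht : 0 < t)
    {c : Fin m → K} (hc : c ∈ C) {p : Patch m t K} (hp : p.Avoids c) : p.overwrite c ∉ C := by
  intro hv
  obtain ⟨i, hi⟩ : p.1.1.Nonempty := card_pos.1 (by rw [p.1.2]; exact ht)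
  have := C.eq_of_forall_notMem_eq hC hv hc p.1.2.le fun j hj => p.overwrite_of_notMem c hj
  exact (p.overwrite_ne_iff hp i).2 hi (congrFun this i)

end Ring

section Field

variable {K : Type*} [Field K] [Fintype K] [DecidableEq K] {m t : ℕ}
  {C : Submodule K (Fin m → K)}

theorem Submodule.bijective_restrict_prod (hC : ∀ c ∈ C, c ≠ 0 → t < hammingNorm c)
    (hrank : Module.finrank K C = m - t) {s d : Finset (Fin m)} (hsd : Disjoint s d)
    (hcard : s.card + d.card = m - t) :
    Function.Bijective fun c : C =>
      (fun i : s => (c : Fin m → K) i, fun i : d => (c : Fin m → K) i) := by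
  classical
  rw [Fintype.bijective_iff_injective_and_card]
  refine ⟨fun x y hxy => Subtype.ext <| C.eq_of_forall_notMem_eq hC x.2 y.2 (s := (s ∪ d)ᶜ)
    (by rw [card_compl, card_union_of_disjoint hsd, Fintype.card_fin]; omega) fun i hi => ?_, ?_⟩
  · rcases mem_union.1 (notMem_compl.1 hi) with hi | hi
    · exact congrFun (Prod.ext_iff.1 hxy).1 ⟨i, hi⟩
    · exact congrFun (Prod.ext_iff.1 hxy).2 ⟨i, hi⟩
  · rw [Module.card_eq_pow_finrank (K := K), hrank, ← hcard, pow_add]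
    simp

theorem Submodule.natCard_avoids (hC : ∀ c ∈ C, c ≠ 0 → t < hammingNorm c)
    (hrank : Module.finrank K C = m - t) (hmt : 2 * t ≤ m) (p : Patch m t K) :
    Nat.card {c : C // p.Avoids c} = (Fintype.card K - 1) ^ t * Fintype.card K ^ (m - 2 * t) := by
  obtain ⟨d, hd, hdcard⟩ := exists_subset_card_eq (s := p.1.1ᶜ) (n := m - 2 * t)
    (by rw [card_compl, Fintype.card_fin, p.1.2]; omega)
  let e := Equiv.ofBijective _ <| C.bijective_restrict_prod hC hrank
    (disjoint_compl_right.mono_right hd) (by rw [p.1.2, hdcard]; omega)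
  rw [Nat.card_congr (e.subtypeEquiv (p := fun c : C => p.Avoids c)
      (q := fun x => ∀ i, x.1 i ≠ p.2 i) fun _ => Iff.rfl),
    Nat.card_congr (Equiv.prodSubtypeFstEquivSubtypeProd (β := d → K)
      (p := fun y : p.1.1 → K => ∀ i, y i ≠ p.2 i)), Nat.card_prod, Nat.card_pi_ne,
    Nat.card_fun]
  simp [p.1.2, hdcard]

theorem Submodule.natCard_range_overwrite_le (hC : ∀ c ∈ C, c ≠ 0 → t < hammingNorm c)
    (hrank : Module.finrank K C = m - t) (ht : 0 < t) :
    Nat.card (Set.range fun x : {x : C × Patch m t K // x.2.Avoids x.1} => x.1.2.overwrite x.1.1)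
      ≤ Fintype.card K ^ m - Fintype.card K ^ (m - t) :=
  calc _ ≤ (C : Set (Fin m → K))ᶜ.ncard :=
        Set.ncard_le_ncard (by rintro _ ⟨x, rfl⟩; exact C.overwrite_notMem hC ht x.1.1.2 x.2)
    _ = _ := by
      rw [Set.ncard_compl, ← Nat.card_coe_set_eq, SetLike.coe_sort_coe,
        Module.natCard_eq_pow_finrank (K := K) (V := C), hrank, Nat.card_fun]
      simp

end Field

theorem exists_PDA_of_MDS_general (m t q : ℕ) (ht : 1 ≤ t) (hmt : 2 * t ≤ m)
    (K : Type) [Field K] [Fintype K] [DecidableEq K]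
    (hcard : Fintype.card K = q)
    (hMDS : ∃ C : Submodule K (Fin m → K), Module.finrank K C = m - t ∧
      ∀ c ∈ C, c ≠ 0 → m - (m - t) + 1 ≤ hammingNorm c) :
    ∃ P : Fin (q ^ (m - t)) → Fin (m.choose t * q ^ t) →
        Option (Fin (q ^ m - q ^ (m - t))),
      IsPDAWith (q ^ (m - t)) (m.choose t * q ^ t)
        (q ^ (m - t) - (q - 1) ^ t * q ^ (m - 2 * t))
        (q ^ m - q ^ (m - t)) P := by
  obtain ⟨C, hrank, hwt⟩ := hMDS
  have hC : ∀ c ∈ C, c ≠ 0 → t < hammingNorm c := fun c hc hne => by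
    have := hwt c hc hne; omega
  subst hcard
  refine exists_isPDAWith_of_filled (fun (c : C) (p : Patch m t K) => p.Avoids c)
    (fun c p => p.overwrite c) ?_ ?_ (C.natCard_avoids hC hrank hmt)
    (fun _ _ _ _ _ => C.overwrite_pair hC) (C.natCard_range_overwrite_le hC hrank ht)
    (pow_sub_pow_le_choose_mul Fintype.one_lt_card hmt)
  · rw [Module.natCard_eq_pow_finrank (K := K), hrank, Nat.card_eq_fintype_card]
  · rw [Patch.natCard, Nat.card_eq_fintype_card]

/-- Theorem 8: let `m ≥ 2t ≥ 2`, let `q` be a prime power and `F_q` (here the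
type `K`) the finite field with `q` elements.  If there exists an
`[m, m−t]_q` MDS code (an `(m−t)`-dimensional subspace of `K^m` all of whose
nonzero vectors have Hamming weight at least `m − (m−t) + 1`), then there
exists a `(C(m,t)·q^t, q^{m−t}, q^{m−t} − (q−1)^t·q^{m−2t}, q^m − q^{m−t})`
placement delivery array. -/
theorem exists_PDA_of_MDS (m t q : ℕ) (ht : 1 ≤ t) (hmt : 2 * t ≤ m)
    (hq : IsPrimePow q)
    (K : Type) [Field K] [Fintype K] [DecidableEq K]
    (hcard : Fintype.card K = q)
    (hMDS : ∃ C : Submodule K (Fin m → K), Module.finrank K C = m - t ∧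
      ∀ c ∈ C, c ≠ 0 → m - (m - t) + 1 ≤ hammingNorm c) :
    ∃ P : Fin (q ^ (m - t)) → Fin (m.choose t * q ^ t) →
        Option (Fin (q ^ m - q ^ (m - t))),
      IsPDAWith (q ^ (m - t)) (m.choose t * q ^ t)
        (q ^ (m - t) - (q - 1) ^ t * q ^ (m - 2 * t))
        (q ^ m - q ^ (m - t)) P :=
  exists_PDA_of_MDS_general m t q ht hmt K hcard hMDS
end

section
/- For all integers m, t, q with 0 < t < m and q ≥ 2, there exists a (C(m,t)·q^t, q^m, q^m − (q−1)^t·q^{m−t}, (q−1)^t·q^m) placement delivery array, where C(m,t) denotes the binomial coefficient. (This is the PDA obtained from Construction 1 by taking the row index set to be all of {0,...,q-1}^m and the full column index set.) -/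
def IsIndexedPDA {R C S : Type*} (Z : ℕ) (P : R → C → Option S) : Prop :=
  ((∀ s, ∃ r c, P r c = some s) ∧
    ∀ r₁ r₂ c₁ c₂ s, (r₁, c₁) ≠ (r₂, c₂) → P r₁ c₁ = some s → P r₂ c₂ = some s →
      r₁ ≠ r₂ ∧ c₁ ≠ c₂ ∧ P r₁ c₂ = none ∧ P r₂ c₁ = none) ∧
  ∀ c, {r | P r c = none}.ncard = Z

theorem isPDAWith_iff_isIndexedPDA {F K Z S : ℕ} (P : Fin F → Fin K → Option (Fin S)) :
    IsPDAWith F K Z S P ↔ IsIndexedPDA Z P :=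
  Iff.rfl

theorem IsIndexedPDA.reindex {R C S R' C' S' : Type*} {Z : ℕ} {P : R → C → Option S}
    (hP : IsIndexedPDA Z P) (eR : R' ≃ R) (eC : C' ≃ C) (eS : S ≃ S') :
    IsIndexedPDA Z fun r c => (P (eR r) (eC c)).map eS := by
  obtain ⟨⟨hsurj, hpair⟩, hstars⟩ := hP
  refine ⟨⟨fun s => ?_, fun r₁ r₂ c₁ c₂ s hne h₁ h₂ => ?_⟩, fun c => ?_⟩
  · obtain ⟨r, c, h⟩ := hsurj (eS.symm s)
    exact ⟨eR.symm r, eC.symm c, by simp [h]⟩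
  · rw [Option.map_eq_some_iff] at h₁ h₂
    obtain ⟨s₁, h₁, rfl⟩ := h₁
    obtain ⟨s₂, h₂, hs⟩ := h₂
    obtain rfl := eS.injective hs
    have hne' : (eR r₁, eC c₁) ≠ (eR r₂, eC c₂) := by
      simpa only [ne_eq, Prod.mk.injEq, EmbeddingLike.apply_eq_iff_eq] using hne
    obtain ⟨hr, hc, h₁₂, h₂₁⟩ := hpair _ _ _ _ _ hne' h₁ h₂
    exact ⟨fun h => hr (congrArg eR h), fun h => hc (congrArg eC h),
      by simp [h₁₂], by simp [h₂₁]⟩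
  · have hpre : {r | (P (eR r) (eC c)).map eS = none} = eR ⁻¹' {r | P r (eC c) = none} := by
      ext r
      simp
    rw [hpre, Set.ncard_preimage_of_injective_subset_range eR.injective (by simp), hstars]

theorem ncard_setOf_forall_ne {ι A : Type*} [Fintype ι] [Fintype A] (T : Finset ι)
    (b : T → A) :
    {f : ι → A | ∀ i : T, f i ≠ b i}.ncard
      = (Fintype.card A - 1) ^ T.card * Fintype.card A ^ (Fintype.card ι - T.card) := by
  classical
  have hset : {f : ι → A | ∀ i : T, f i ≠ b i}
      = Fintype.piFinset fun i =>
          if h : i ∈ T then Finset.univ.erase (b ⟨i, h⟩) else Finset.univ := by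
    ext f
    simp only [Set.mem_ofPred_eq, Finset.mem_coe, Fintype.mem_piFinset]
    refine ⟨fun hf i => ?_, fun hf i => ?_⟩
    · split_ifs with hi
      · exact Finset.mem_erase.2 ⟨hf ⟨i, hi⟩, Finset.mem_univ _⟩
      · exact Finset.mem_univ _
    · simpa using hf i
  have hcard (i : ι) : (if h : i ∈ T then Finset.univ.erase (b ⟨i, h⟩) else Finset.univ).card
      = if i ∈ T then Fintype.card A - 1 else Fintype.card A := by
    split_ifs <;> simp
  rw [hset, Set.ncard_coe_finset, Fintype.card_piFinset,
    Finset.prod_congr rfl fun i _ => hcard i, Finset.prod_ite, Finset.prod_const,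
    Finset.prod_const, Finset.filter_mem_eq_inter, Finset.univ_inter, Finset.filter_not,
    Finset.filter_mem_eq_inter, Finset.univ_inter, ← Finset.compl_eq_univ_sdiff, Finset.card_compl]

namespace PDAConstruction

variable (ι A : Type*) (t : ℕ)

abbrev Column := Σ T : {T : Finset ι // T.card = t}, (T.1 → A)

abbrev Symbol [Zero A] := (Fin t → {a : A // a ≠ 0}) × (ι → A)

variable {ι A t}

-- Any enumeration of the `t`-set works: it only fixes how a symbol lists `(f - b)|_T`.
noncomputable def Column.enum (c : Column ι A t) : Fin t ≃ c.1.1 :=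
  (Finset.equivFinOfCardEq c.1.2).symm

variable [DecidableEq ι]

theorem card_column [Fintype ι] [Fintype A] :
    Fintype.card (Column ι A t) = (Fintype.card ι).choose t * Fintype.card A ^ t := by
  rw [Fintype.card_sigma, Finset.sum_congr rfl fun T _ => by rw [Fintype.card_fun,
    Fintype.card_coe, T.2], Finset.sum_const, Finset.card_univ, Fintype.card_finset_len,
    smul_eq_mul]

def Column.overwrite (c : Column ι A t) (f : ι → A) : ι → A :=
  fun i => if h : i ∈ c.1.1 then c.2 ⟨i, h⟩ else f i

theorem Column.overwrite_of_mem (c : Column ι A t) (f : ι → A) {i : ι} (hi : i ∈ c.1.1) :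
    c.overwrite f i = c.2 ⟨i, hi⟩ :=
  dif_pos hi

theorem Column.overwrite_of_notMem (c : Column ι A t) (f : ι → A) {i : ι} (hi : i ∉ c.1.1) :
    c.overwrite f i = f i :=
  dif_neg hi

variable [AddGroup A] [DecidableEq A]

noncomputable def entry (f : ι → A) (c : Column ι A t) : Option (Symbol ι A t) :=
  if h : ∀ i : c.1.1, f i ≠ c.2 i then
    some (fun j => ⟨f (c.enum j) - c.2 (c.enum j), sub_ne_zero.2 (h _)⟩, c.overwrite f)
  else none

theorem entry_eq_none_iff {f : ι → A} {c : Column ι A t} :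
    entry f c = none ↔ ∃ i : c.1.1, f i = c.2 i := by
  simp [entry]

theorem entry_eq_some_iff {f : ι → A} {c : Column ι A t} {s : Symbol ι A t} :
    entry f c = some s ↔
      s.2 = c.overwrite f ∧ ∀ j, f (c.enum j) = s.1 j + c.2 (c.enum j) := by
  constructor
  · intro h
    unfold entry at h
    split_ifs at h
    obtain rfl := (Option.some_injective _ h).symm
    exact ⟨rfl, fun j => (sub_add_cancel _ _).symm⟩
  · rintro ⟨hs₂, hs₁⟩
    have hne (i : c.1.1) : f i ≠ c.2 i := by
      obtain ⟨j, rfl⟩ := c.enum.surjective i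
      simpa [hs₁ j] using (s.1 j).2
    rw [entry, dif_pos hne, Option.some_inj]
    refine Prod.ext (funext fun j => Subtype.ext ?_) hs₂.symm
    exact sub_eq_of_eq_add (hs₁ j)

theorem eq_of_entry_eq_some_of_fst_eq {f₁ f₂ : ι → A} {c₁ c₂ : Column ι A t}
    {s : Symbol ι A t}
    (h₁ : entry f₁ c₁ = some s) (h₂ : entry f₂ c₂ = some s) (hT : c₁.1 = c₂.1) :
    f₁ = f₂ ∧ c₁ = c₂ := by
  obtain ⟨T, b₁⟩ := c₁
  obtain ⟨T', b₂⟩ := c₂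
  obtain rfl : T = T' := hT
  rw [entry_eq_some_iff] at h₁ h₂
  have hs := h₁.1.symm.trans h₂.1
  obtain rfl : b₁ = b₂ := funext fun ⟨i, hi⟩ => by
    simpa only [Column.overwrite, dif_pos hi] using congrFun hs i
  refine ⟨funext fun i => ?_, rfl⟩
  by_cases hi : i ∈ T.1
  · obtain ⟨j, hj⟩ := (Column.enum ⟨T, b₁⟩).surjective ⟨i, hi⟩
    have e₁ := h₁.2 j
    have e₂ := h₂.2 j
    rw [hj] at e₁ e₂
    rw [e₁, e₂]
  · simpa only [Column.overwrite, dif_neg hi] using congrFun hs i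

theorem entry_eq_none_of_not_subset {f₁ f₂ : ι → A} {c₁ c₂ : Column ι A t}
    {s : Symbol ι A t} (h₁ : entry f₁ c₁ = some s) (h₂ : entry f₂ c₂ = some s)
    (hT : ¬ c₁.1.1 ⊆ c₂.1.1) :
    f₁ ≠ f₂ ∧ entry f₂ c₁ = none := by
  obtain ⟨i, hi₁, hi₂⟩ := Finset.not_subset.1 hT
  have hstar : entry f₂ c₁ = none := by
    rw [entry_eq_some_iff] at h₁ h₂
    refine entry_eq_none_iff.2 ⟨⟨i, hi₁⟩, ?_⟩
    have e₁ := congrFun h₁.1 i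
    have e₂ := congrFun h₂.1 i
    rw [Column.overwrite_of_mem _ _ hi₁] at e₁
    rw [Column.overwrite_of_notMem _ _ hi₂] at e₂
    exact e₂.symm.trans e₁
  refine ⟨?_, hstar⟩
  rintro rfl
  simp [hstar] at h₁

variable [Fintype ι]

theorem exists_entry_eq_some (ht : t ≤ Fintype.card ι) (s : Symbol ι A t) :
    ∃ f c, entry f c = some s := by
  obtain ⟨T, -, hT⟩ :=
    Finset.exists_subset_card_eq (s := Finset.univ) (n := t) (by simpa using ht)
  let c : Column ι A t := ⟨⟨T, hT⟩, fun i => s.2 i⟩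
  let f : ι → A := fun i => if h : i ∈ T then s.1 (c.enum.symm ⟨i, h⟩) + s.2 i else s.2 i
  refine ⟨f, c, entry_eq_some_iff.2 ⟨funext fun i => ?_, fun j => ?_⟩⟩
  · by_cases hi : i ∈ T
    · rw [Column.overwrite_of_mem c f hi]
    · rw [Column.overwrite_of_notMem c f hi]
      simp [f, hi]
  · simp [f, c]

theorem card_symbol [Fintype A] :
    Fintype.card (Symbol ι A t)
      = (Fintype.card A - 1) ^ t * Fintype.card A ^ Fintype.card ι := by
  simp

theorem ncard_setOf_entry_eq_none [Fintype A] (c : Column ι A t) :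
    {f : ι → A | entry f c = none}.ncard
      = Fintype.card A ^ Fintype.card ι
          - (Fintype.card A - 1) ^ t * Fintype.card A ^ (Fintype.card ι - t) := by
  have hstars : {f | entry f c = none} = {f : ι → A | ∀ i : c.1.1, f i ≠ c.2 i}ᶜ := by
    ext f
    simp [entry_eq_none_iff]
  rw [hstars, Set.ncard_compl, ncard_setOf_forall_ne, c.1.2, Nat.card_eq_fintype_card,
    Fintype.card_fun]

theorem isIndexedPDA_entry [Fintype A] (ht : t ≤ Fintype.card ι) :
    IsIndexedPDA
      (Fintype.card A ^ Fintype.card ι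
        - (Fintype.card A - 1) ^ t * Fintype.card A ^ (Fintype.card ι - t))
      (entry : (ι → A) → Column ι A t → Option (Symbol ι A t)) := by
  refine ⟨⟨exists_entry_eq_some ht, fun f₁ f₂ c₁ c₂ s hne h₁ h₂ => ?_⟩,
    ncard_setOf_entry_eq_none⟩
  have hT : c₁.1 ≠ c₂.1 := fun hT => hne <| by
    obtain ⟨rfl, rfl⟩ := eq_of_entry_eq_some_of_fst_eq h₁ h₂ hT
    rfl
  have hcard : c₁.1.1.card = c₂.1.1.card := c₁.1.2.trans c₂.1.2.symm
  have h₁₂ : ¬ c₁.1.1 ⊆ c₂.1.1 := fun h =>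
    hT (Subtype.ext (Finset.eq_of_subset_of_card_le h hcard.ge))
  have h₂₁ : ¬ c₂.1.1 ⊆ c₁.1.1 := fun h =>
    hT (Subtype.ext (Finset.eq_of_subset_of_card_le h hcard.le).symm)
  obtain ⟨hf, hstar₂₁⟩ := entry_eq_none_of_not_subset h₁ h₂ h₁₂
  obtain ⟨-, hstar₁₂⟩ := entry_eq_none_of_not_subset h₂ h₁ h₂₁
  exact ⟨hf, fun h => hT (congrArg Sigma.fst h), hstar₁₂, hstar₂₁⟩

end PDAConstruction

theorem exists_PDA_full_row_index_general (m t q : ℕ)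
    (htm : t < m) (hq : 2 ≤ q) :
    ∃ P : Fin (q ^ m) → Fin (m.choose t * q ^ t) →
        Option (Fin ((q - 1) ^ t * q ^ m)),
      IsPDAWith (q ^ m) (m.choose t * q ^ t)
        (q ^ m - (q - 1) ^ t * q ^ (m - t))
        ((q - 1) ^ t * q ^ m) P := by
  have : NeZero q := ⟨by omega⟩
  have hP := PDAConstruction.isIndexedPDA_entry (ι := Fin m) (A := Fin q) (t := t)
    (by simpa using htm.le)
  have hcol := PDAConstruction.card_column (ι := Fin m) (A := Fin q) (t := t)
  have hsym := PDAConstruction.card_symbol (ι := Fin m) (A := Fin q) (t := t)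
  simp only [Fintype.card_fin] at hP hcol hsym
  exact ⟨_, (isPDAWith_iff_isIndexedPDA _).2 <| hP.reindex
    (Fintype.equivFinOfCardEq (by simp)).symm
    (Fintype.equivFinOfCardEq hcol).symm (Fintype.equivFinOfCardEq hsym)⟩

/-- The second PDA of Shangguan–Zhang–Ge: for all integers `m, t, q` with
`0 < t < m` and `q ≥ 2`, there exists a
`(C(m,t)·q^t, q^m, q^m − (q−1)^t·q^{m−t}, (q−1)^t·q^m)` placement delivery
array (obtained from Construction 1 by taking the row index set to be all of
`{0,...,q-1}^m` and the full column index set). -/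
theorem exists_PDA_full_row_index (m t q : ℕ)
    (ht : 0 < t) (htm : t < m) (hq : 2 ≤ q) :
    ∃ P : Fin (q ^ m) → Fin (m.choose t * q ^ t) →
        Option (Fin ((q - 1) ^ t * q ^ m)),
      IsPDAWith (q ^ m) (m.choose t * q ^ t)
        (q ^ m - (q - 1) ^ t * q ^ (m - t))
        ((q - 1) ^ t * q ^ m) P :=
  exists_PDA_full_row_index_general m t q htm hq
end
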